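/- arXiv:2305.12919 — 6 statements merged into one kernel-verified Lean document; each statement's English description precedes it below -/
import Mathlib

section
/- For every finite nonempty set S of positive real numbers, there exists a packing of the Euclidean plane by disks whose radii all belong to S whose density equals the supremum of the densities of all packings by disks whose radii belong to S; that is, the maximum density is always reached. -/
open Metric Set

noncomputable section

/-- The Euclidean plane. -/
abbrev Plane : Type := EuclideanSpace ℝ (Fin 2)

/-- A closed disk in the plane, given by its center and (positive) radius. -/
structure Disk where
  center : Plane
  radius : ℝ
  radius_pos : 0 < radius

/-- The set of points of a disk (a closed ball). -/
def Disk.set (d : Disk) : Set Plane := closedBall d.center d.radius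

/-- A packing: a family of closed disks with pairwise disjoint interiors. -/
def IsPacking (P : Set Disk) : Prop :=
  ∀ d ∈ P, ∀ d' ∈ P, d ≠ d' → Disjoint (interior d.set) (interior d'.set)

/-- Two disks are (externally) tangent: they intersect in exactly one point. -/
def Disk.Tangent (d d' : Disk) : Prop :=
  dist d.center d'.center = d.radius + d'.radius

/-- The union of the disks of a packing. -/
def packingUnion (P : Set Disk) : Set Plane := ⋃ d ∈ P, d.set

/-- A packing is compact (triangulated) if every connected component of the
complement of the union of the disks is bounded and its closure meets exactly
three of the disks, these three disks being pairwise tangent. -/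
def IsCompactPacking (P : Set Disk) : Prop :=
  IsPacking P ∧
  ∀ x ∈ (packingUnion P)ᶜ,
    Bornology.IsBounded (connectedComponentIn (packingUnion P)ᶜ x) ∧
    ∃ d₁ d₂ d₃ : Disk, d₁ ∈ P ∧ d₂ ∈ P ∧ d₃ ∈ P ∧
      d₁ ≠ d₂ ∧ d₁ ≠ d₃ ∧ d₂ ≠ d₃ ∧
      d₁.Tangent d₂ ∧ d₁.Tangent d₃ ∧ d₂.Tangent d₃ ∧
      {d ∈ P | (closure (connectedComponentIn (packingUnion P)ᶜ x) ∩ d.set).Nonempty}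
        = {d₁, d₂, d₃}

/-- A packing uses the radius `r` if one of its disks has radius `r`. -/
def UsesRadius (P : Set Disk) (r : ℝ) : Prop := ∃ d ∈ P, d.radius = r

/-- All radii of the disks of `P` belong to `S`. -/
def RadiiIn (P : Set Disk) (S : Set ℝ) : Prop := ∀ d ∈ P, d.radius ∈ S

/-- The square `[-r, r]²`. -/
def square (r : ℝ) : Set Plane := {x | |x 0| ≤ r ∧ |x 1| ≤ r}

/-- The density of a packing: the limsup, as `r → ∞`, of the proportion of the
square `[-r, r]²` covered by the disks. -/
def density (P : Set Disk) : ℝ :=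
  Filter.limsup
    (fun r : ℝ => (MeasureTheory.volume (packingUnion P ∩ square r)).toReal / (4 * r ^ 2))
    Filter.atTop

end

open Metric Set MeasureTheory Filter

lemma my_square_eq (r : ℝ) :
    square r = (MeasurableEquiv.toLp 2 (Fin 2 → ℝ)).symm ⁻¹' (Set.univ.pi fun _ : Fin 2 => Icc (-r) r) := by
  ext x
  simp only [square, mem_setOf_eq, mem_preimage, Set.mem_pi, mem_univ, forall_true_left, mem_Icc,
    Fin.forall_fin_two, abs_le]
  exact Iff.rfl

lemma my_square_measurable (r : ℝ) : MeasurableSet (square r) := by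
  rw [my_square_eq]
  exact (MeasurableEquiv.toLp 2 (Fin 2 → ℝ)).symm.measurable
    (MeasurableSet.univ_pi fun _ => measurableSet_Icc)

lemma my_vol_square (r : ℝ) (hr : 0 ≤ r) : volume (square r) = ENNReal.ofReal (4 * r ^ 2) := by
  rw [my_square_eq,
    (EuclideanSpace.volume_preserving_symm_measurableEquiv_toLp (Fin 2)).measure_preimage
      ((MeasurableSet.univ_pi fun _ : Fin 2 => measurableSet_Icc).nullMeasurableSet)]
  rw [volume_pi_pi]
  simp only [Real.volume_Icc]
  rw [Finset.prod_const, ← ENNReal.ofReal_pow (by linarith)]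
  norm_num
  congr 1
  ring_nf
  rw [ENNReal.ofReal_mul (by positivity)]
  norm_num

lemma my_square_mono {r r' : ℝ} (h : r ≤ r') : square r ⊆ square r' := by
  intro x hx
  exact ⟨hx.1.trans h, hx.2.trans h⟩

lemma my_coord_le_dist (x y : Plane) (i : Fin 2) : |x i - y i| ≤ dist x y := by
  rw [EuclideanSpace.dist_eq, ← Real.sqrt_sq_eq_abs]
  apply Real.sqrt_le_sqrt
  calc (x i - y i) ^ 2 = dist (x i) (y i) ^ 2 := by rw [Real.dist_eq, sq_abs]
    _ ≤ ∑ j : Fin 2, dist (x j) (y j) ^ 2 :=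
        Finset.single_le_sum (f := fun j => dist (x j) (y j) ^ 2)
          (fun j _ => sq_nonneg _) (Finset.mem_univ i)
noncomputable def dfun (P : Set Disk) (r : ℝ) : ℝ :=
  (MeasureTheory.volume (packingUnion P ∩ square r)).toReal / (4 * r ^ 2)

lemma my_density_eq (P : Set Disk) : density P = Filter.limsup (dfun P) Filter.atTop := rfl

lemma my_dfun_nonneg (P : Set Disk) (r : ℝ) : 0 ≤ dfun P r :=
  div_nonneg ENNReal.toReal_nonneg (by positivity)

lemma my_vol_le (P : Set Disk) (r : ℝ) (hr : 0 ≤ r) :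
    volume (packingUnion P ∩ square r) ≤ ENNReal.ofReal (4 * r ^ 2) := by
  rw [← my_vol_square r hr]
  exact measure_mono inter_subset_right

lemma my_dfun_le_one (P : Set Disk) {r : ℝ} (hr : 0 ≤ r) : dfun P r ≤ 1 := by
  rcases eq_or_lt_of_le hr with h | h
  · have : volume (packingUnion P ∩ square 0) ≤ ENNReal.ofReal (4 * 0 ^ 2) := my_vol_le P 0 le_rfl
    simp only [← h, dfun]
    norm_num
  · have h1 := my_vol_le P r hr
    have h2 : (volume (packingUnion P ∩ square r)).toReal ≤ 4 * r ^ 2 := by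
      calc (volume (packingUnion P ∩ square r)).toReal
          ≤ (ENNReal.ofReal (4 * r ^ 2)).toReal := ENNReal.toReal_mono ENNReal.ofReal_ne_top h1
        _ = 4 * r ^ 2 := ENNReal.toReal_ofReal (by positivity)
    rw [dfun, div_le_one (by positivity)]
    exact h2

lemma my_bdd (P : Set Disk) : Filter.IsBoundedUnder (· ≤ ·) Filter.atTop (dfun P) := by
  refine ⟨1, ?_⟩
  rw [Filter.eventually_map]
  filter_upwards [Filter.eventually_ge_atTop (0 : ℝ)] with r hr using my_dfun_le_one P hr

lemma my_cobdd (P : Set Disk) : Filter.IsCoboundedUnder (· ≤ ·) Filter.atTop (dfun P) := by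
  apply Filter.IsBoundedUnder.isCoboundedUnder_le (α := ℝ)
  exact ⟨0, by rw [Filter.eventually_map]; filter_upwards with r using my_dfun_nonneg P r⟩

lemma my_density_le_one (P : Set Disk) : density P ≤ 1 := by
  rw [my_density_eq]
  apply Filter.limsup_le_of_le (my_cobdd P)
  filter_upwards [Filter.eventually_ge_atTop (0 : ℝ)] with r hr using my_dfun_le_one P hr
lemma my_near (x y : Plane) (c t : ℝ) (hy : y ∈ square c) (hd : dist x y ≤ t) :
    x ∈ square (c + t) := by
  obtain ⟨h0, h1⟩ := hy
  constructor
  · calc |x 0| ≤ |y 0| + |x 0 - y 0| := by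
          have := abs_add_le (y 0) (x 0 - y 0); simpa using this
      _ ≤ c + t := add_le_add h0 ((my_coord_le_dist x y 0).trans hd)
  · calc |x 1| ≤ |y 1| + |x 1 - y 1| := by
          have := abs_add_le (y 1) (x 1 - y 1); simpa using this
      _ ≤ c + t := add_le_add h1 ((my_coord_le_dist x y 1).trans hd)

lemma my_far (x z : Plane) (c t : ℝ) (hz : z ∉ square c) (hd : dist x z ≤ t) :
    x ∉ square (c - t) := by
  intro hx
  apply hz
  have h0 : |z 0| ≤ |x 0| + |z 0 - x 0| := by
    have := abs_add_le (x 0) (z 0 - x 0); simpa using this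
  have h1 : |z 1| ≤ |x 1| + |z 1 - x 1| := by
    have := abs_add_le (x 1) (z 1 - x 1); simpa using this
  have hc0 := (my_coord_le_dist z x 0).trans ((dist_comm z x).trans_le hd)
  have hc1 := (my_coord_le_dist z x 1).trans ((dist_comm z x).trans_le hd)
  exact ⟨by have := hx.1; linarith, by have := hx.2; linarith⟩

lemma my_disk_diam (d : Disk) (a : ℝ) (hr : d.radius ≤ a) {x y : Plane}
    (hx : x ∈ d.set) (hy : y ∈ d.set) : dist x y ≤ 2 * a := by
  rw [Disk.set, Metric.mem_closedBall] at hx hy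
  calc dist x y ≤ dist x d.center + dist y d.center := dist_triangle_right x y d.center
    _ ≤ 2 * a := by linarith
lemma my_strippos (a γ : ℝ) (ha : 0 < a) (h : 2*a + 1 ≤ γ) : (0:ℝ) ≤ 4*γ^2 - 4*(γ-2*a)^2 := by
  nlinarith

lemma my_gamma2a (n : ℕ) (a β γ : ℝ) (ha : 0 < a) (hβ : 0 ≤ β)
    (hγge : ((n:ℝ)+1)*(β+2*a+1) ≤ γ) : 2*a + 1 ≤ γ := by
  have hn1 : (1:ℝ) ≤ (n:ℝ)+1 := by
    have := Nat.cast_nonneg (α := ℝ) n; linarith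
  nlinarith

lemma my_est (n : ℕ) (s a β γ t u v : ℝ) (ha : 0 < a) (hβ : 0 ≤ β)
    (hγge : ((n:ℝ)+1)*(β+2*a+1) ≤ γ)
    (hf1 : t ≤ v + 4*(β+2*a)^2 + (4*γ^2 - 4*(γ-2*a)^2))
    (hf2 : v ≤ u)
    (hdfQ : s - 2/((n:ℝ)+1) < t / (4*γ^2)) :
    s - 5/((n:ℝ)+1) ≤ u / (4*γ^2) := by
  have hn0 : (0:ℝ) < (n:ℝ)+1 := by positivity
  have hn1 : (1:ℝ) ≤ (n:ℝ)+1 := by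
    have := Nat.cast_nonneg (α := ℝ) n; linarith
  have hγ2a : 2*a + 1 ≤ γ := my_gamma2a n a β γ ha hβ hγge
  have hγpos : (0:ℝ) < γ := by linarith
  have h4γ : (0:ℝ) < 4*γ^2 := by positivity
  have hthat : (s - 2/((n:ℝ)+1)) * (4*γ^2) < t := (lt_div_iff₀ h4γ).mp hdfQ
  have hA : ((n:ℝ)+1) * (β+2*a) ≤ γ := by nlinarith
  have hA2 : (((n:ℝ)+1) * (β+2*a))^2 ≤ γ^2 := by
    have h0 : (0:ℝ) ≤ ((n:ℝ)+1) * (β+2*a) := by positivity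
    nlinarith
  have hB : 16*a*((n:ℝ)+1) ≤ 8*γ := by nlinarith
  have hE : 4*(β+2*a)^2 + (4*γ^2 - 4*(γ-2*a)^2) ≤ 12*γ^2/((n:ℝ)+1) := by
    rw [le_div_iff₀ hn0]
    have k1 : 16*a*((n:ℝ)+1)*γ ≤ 8*γ*γ := mul_le_mul_of_nonneg_right hB hγpos.le
    have k2 : 4*(β+2*a)^2*((n:ℝ)+1) ≤ 4*γ^2 := by
      nlinarith [mul_le_mul_of_nonneg_right
        (show (n:ℝ)+1 ≤ ((n:ℝ)+1)^2 by nlinarith) (sq_nonneg (β+2*a))]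
    nlinarith
  rw [le_div_iff₀ h4γ]
  have hring : (s - 5/((n:ℝ)+1)) * (4*γ^2)
      = (s - 2/((n:ℝ)+1)) * (4*γ^2) - 12*γ^2/((n:ℝ)+1) := by
    field_simp
    ring
  linarith

/-- for every finite nonempty set `S` of positive reals, some packing with
radii in `S` achieves the supremum of densities of all packings with radii in `S`. -/
theorem max_density_attained (S : Finset ℝ) (hS : S.Nonempty) (hpos : ∀ r ∈ S, 0 < r) :
    ∃ P : Set Disk, IsPacking P ∧ RadiiIn P ↑S ∧
      IsGreatest {x : ℝ | ∃ Q : Set Disk, IsPacking Q ∧ RadiiIn Q ↑S ∧ density Q = x}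
        (density P) := by
  classical
  set D := {x : ℝ | ∃ Q : Set Disk, IsPacking Q ∧ RadiiIn Q ↑S ∧ density Q = x} with hD
  have hemp : IsPacking (∅ : Set Disk) := fun d hd => absurd hd (Set.notMem_empty d)
  have hempR : RadiiIn (∅ : Set Disk) ↑S := fun d hd => absurd hd (Set.notMem_empty d)
  have hDne : D.Nonempty := ⟨density ∅, ⟨∅, hemp, hempR, rfl⟩⟩
  have hDbdd : BddAbove D := ⟨1, fun x hx => by
    obtain ⟨Q, _, _, hq⟩ := hx
    exact hq ▸ my_density_le_one Q⟩
  set s := sSup D with hs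
  set a := S.max' hS with ha
  have hapos : (0:ℝ) < a := hpos _ (S.max'_mem hS)
  -- the one-step extraction
  have hstep : ∀ n : ℕ, ∀ B : ℝ, ∃ QR : Set Disk × ℝ,
      IsPacking QR.1 ∧ RadiiIn QR.1 ↑S ∧ ((n:ℝ)+1) * (B + 2*a + 1) ≤ QR.2 ∧
      s - 2/((n:ℝ)+1) < dfun QR.1 QR.2 := by
    intro n B
    have h1 : (0:ℝ) < 1/((n:ℝ)+1) := by positivity
    obtain ⟨x, hxD, hx⟩ := exists_lt_of_lt_csSup hDne (show s - 1/((n:ℝ)+1) < s by linarith)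
    obtain ⟨Q, hQ1, hQ2, hQ3⟩ := hxD
    have hfr : ∃ᶠ r in Filter.atTop, s - 2/((n:ℝ)+1) < dfun Q r := by
      apply Filter.frequently_lt_of_lt_limsup (my_cobdd Q)
      rw [← my_density_eq, hQ3]
      have : (2:ℝ)/((n:ℝ)+1) = 1/((n:ℝ)+1) + 1/((n:ℝ)+1) := by ring
      linarith
    obtain ⟨r, hr1, hr2⟩ :=
      (hfr.and_eventually (Filter.eventually_ge_atTop (((n:ℝ)+1) * (B + 2*a + 1)))).exists
    exact ⟨(Q, r), hQ1, hQ2, hr2, hr1⟩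
  choose F hF1 hF2 hF3 hF4 using hstep
  set G : ℕ → Set Disk × ℝ := fun n => Nat.rec ((∅ : Set Disk), (0:ℝ)) (fun k p => F k p.2) n
    with hG
  set Q : ℕ → Set Disk := fun n => (G (n+1)).1 with hQ
  set R : ℕ → ℝ := fun n => (G n).2 with hR
  have hQdef : ∀ n, Q n = (F n (R n)).1 := fun n => rfl
  have hRdef : ∀ n, R (n+1) = (F n (R n)).2 := fun n => rfl
  have hQp : ∀ n, IsPacking (Q n) := fun n => hF1 n (R n)
  have hQr : ∀ n, RadiiIn (Q n) ↑S := fun n => hF2 n (R n)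
  have hge : ∀ n : ℕ, ((n:ℝ)+1) * (R n + 2*a + 1) ≤ R (n+1) := fun n => hF3 n (R n)
  have hdf : ∀ n : ℕ, s - 2/((n:ℝ)+1) < dfun (Q n) (R (n+1)) := fun n => hF4 n (R n)
  have hR0 : R 0 = 0 := rfl
  have hRnn : ∀ n, 0 ≤ R n := by
    intro n
    induction n with
    | zero => exact le_of_eq hR0.symm
    | succ k ih =>
      have := hge k
      nlinarith [Nat.cast_nonneg (α := ℝ) k]
  have hRsucc : ∀ n, R n + 2*a + 1 ≤ R (n+1) := by
    intro n
    have h1 := hge n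
    have h2 := hRnn n
    nlinarith [Nat.cast_nonneg (α := ℝ) n]
  have hRmono : Monotone R := monotone_nat_of_le_succ fun n => by
    have := hRsucc n; linarith
  -- the combined packing
  set C : ℕ → Set Disk := fun n =>
    {d | d ∈ Q n ∧ d.set ⊆ square (R (n+1)) ∧ ∀ y ∈ d.set, y ∉ square (R n)} with hC
  set P : Set Disk := {d | ∃ n, d ∈ C n} with hP
  have hCP : ∀ n, C n ⊆ P := fun n d hd => ⟨n, hd⟩
  -- disks in different levels have disjoint sets
  have hlev : ∀ m n, m < n → ∀ d ∈ C m, ∀ d' ∈ C n, Disjoint d.set d'.set := by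
    intro m n hmn d hd d' hd'
    rw [Set.disjoint_left]
    intro y hy hy'
    have h1 : y ∈ square (R (m+1)) := hd.2.1 hy
    have h2 : y ∈ square (R n) := my_square_mono (hRmono hmn) h1
    exact hd'.2.2 y hy' h2
  have hpack : IsPacking P := by
    intro d hd d' hd' hne
    obtain ⟨m, hdm⟩ := hd
    obtain ⟨n, hdn⟩ := hd'
    rcases lt_trichotomy m n with h | h | h
    · exact (hlev m n h d hdm d' hdn).mono interior_subset interior_subset
    · subst h
      exact hQp m d hdm.1 d' hdn.1 hne
    · exact ((hlev n m h d' hdn d hdm).symm).mono interior_subset interior_subset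
  have hradii : RadiiIn P ↑S := by
    rintro d ⟨n, hdn⟩
    exact hQr n d hdn.1
  -- main density estimate
  have hmain : ∀ n : ℕ, s - 5/((n:ℝ)+1) ≤ dfun P (R (n+1)) := by
    intro n
    have hQrn := hQr n
    have hdfQ0 := hdf n
    have hβ0 : 0 ≤ R n := hRnn n
    have hγge := hge n
    set β := R n with hβ
    set γ := R (n+1) with hγdef
    have hn0 : (0:ℝ) < (n:ℝ)+1 := by positivity
    have hγ2a : 2*a + 1 ≤ γ := my_gamma2a n a β γ hapos hβ0 hγge
    have hγpos : (0:ℝ) < γ := by linarith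
    have hrad : ∀ d ∈ Q n, d.radius ≤ a := fun d hd => S.le_max' _ (hQrn d hd)
    -- inclusion of the n-th packing into the kept disks plus boundary regions
    have hincl : packingUnion (Q n) ∩ square γ ⊆
        ((⋃ d ∈ C n, d.set) ∪ square (β + 2*a)) ∪ (square γ \ square (γ - 2*a)) := by
      rintro x ⟨hxU, hxγ⟩
      simp only [packingUnion, Set.mem_iUnion₂] at hxU
      obtain ⟨d, hdQ, hxd⟩ := hxU
      by_cases hd : d ∈ C n
      · exact Or.inl (Or.inl (Set.mem_iUnion₂.mpr ⟨d, hd, hxd⟩))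
      · have hdQ' : ¬(d.set ⊆ square γ ∧ ∀ y ∈ d.set, y ∉ square β) := fun h => hd ⟨hdQ, h.1, h.2⟩
        have hdiam : ∀ u ∈ d.set, ∀ v ∈ d.set, dist u v ≤ 2*a :=
          fun u hu v hv => my_disk_diam d a (hrad d hdQ) hu hv
        rw [not_and_or] at hdQ'
        rcases hdQ' with h | h
        · rw [Set.not_subset] at h
          obtain ⟨z, hz, hzout⟩ := h
          exact Or.inr ⟨hxγ, my_far x z γ (2*a) hzout (hdiam x hxd z hz)⟩
        · push_neg at h
          obtain ⟨y, hy, hyβ⟩ := h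
          exact Or.inl (Or.inr (my_near x y β (2*a) hyβ (hdiam x hxd y hy)))
    set Un := ⋃ d ∈ C n, d.set with hUn
    have hUnγ : Un ⊆ square γ := Set.iUnion₂_subset fun d hd => hd.2.1
    have hUnP : Un ⊆ packingUnion P := by
      intro x hx
      rw [hUn, Set.mem_iUnion₂] at hx
      obtain ⟨d, hd, hxd⟩ := hx
      simp only [packingUnion, Set.mem_iUnion₂]
      exact ⟨d, hCP n hd, hxd⟩
    have hvol : MeasureTheory.volume (packingUnion (Q n) ∩ square γ)
        ≤ MeasureTheory.volume Un + MeasureTheory.volume (square (β + 2*a))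
          + MeasureTheory.volume (square γ \ square (γ - 2*a)) :=
      (MeasureTheory.measure_mono hincl).trans
        ((MeasureTheory.measure_union_le _ _).trans
          (add_le_add_left (MeasureTheory.measure_union_le _ _) _))
    have hstrip : MeasureTheory.volume (square γ \ square (γ - 2*a))
        = ENNReal.ofReal (4*γ^2 - 4*(γ-2*a)^2) := by
      rw [MeasureTheory.measure_diff (my_square_mono (by linarith))
          (my_square_measurable _).nullMeasurableSet
          (by rw [my_vol_square _ (by linarith : (0:ℝ) ≤ γ - 2*a)]; exact ENNReal.ofReal_ne_top),
        my_vol_square _ hγpos.le, my_vol_square _ (by linarith : (0:ℝ) ≤ γ - 2*a),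
        ← ENNReal.ofReal_sub _ (by positivity)]
    have hsq2 : MeasureTheory.volume (square (β + 2*a)) = ENNReal.ofReal (4*(β+2*a)^2) :=
      my_vol_square _ (by linarith)
    have hUnfin : MeasureTheory.volume Un ≠ ⊤ :=
      ((MeasureTheory.measure_mono hUnγ).trans_lt
        (by rw [my_vol_square _ hγpos.le]; exact ENNReal.ofReal_lt_top)).ne
    have hPQfin : MeasureTheory.volume (packingUnion P ∩ square γ) ≠ ⊤ :=
      ((MeasureTheory.measure_mono Set.inter_subset_right).trans_lt
        (by rw [my_vol_square _ hγpos.le]; exact ENNReal.ofReal_lt_top)).ne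
    have hstrippos : (0:ℝ) ≤ 4*γ^2 - 4*(γ-2*a)^2 := my_strippos a γ hapos hγ2a
    have hf1 : (MeasureTheory.volume (packingUnion (Q n) ∩ square γ)).toReal
        ≤ (MeasureTheory.volume Un).toReal + 4*(β+2*a)^2 + (4*γ^2 - 4*(γ-2*a)^2) := by
      rw [hstrip, hsq2] at hvol
      calc (MeasureTheory.volume (packingUnion (Q n) ∩ square γ)).toReal
          ≤ (MeasureTheory.volume Un + ENNReal.ofReal (4*(β+2*a)^2)
              + ENNReal.ofReal (4*γ^2 - 4*(γ-2*a)^2)).toReal := by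
            apply ENNReal.toReal_mono ?_ hvol
            finiteness
        _ = (MeasureTheory.volume Un).toReal + 4*(β+2*a)^2 + (4*γ^2 - 4*(γ-2*a)^2) := by
            rw [ENNReal.toReal_add (by finiteness) (by finiteness),
              ENNReal.toReal_add hUnfin (by finiteness),
              ENNReal.toReal_ofReal (by positivity), ENNReal.toReal_ofReal hstrippos]
    have hf2 : (MeasureTheory.volume Un).toReal
        ≤ (MeasureTheory.volume (packingUnion P ∩ square γ)).toReal :=
      ENNReal.toReal_mono hPQfin
        (MeasureTheory.measure_mono (Set.subset_inter hUnP hUnγ))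
    show s - 5/((n:ℝ)+1)
        ≤ (MeasureTheory.volume (packingUnion P ∩ square γ)).toReal / (4*γ^2)
    exact my_est n s a β γ _ _ _ hapos hβ0 hγge hf1 hf2 hdfQ0
  -- density of P is at least s
  have hsle : s ≤ density P := by
    apply le_of_forall_pos_le_add
    intro ε hε
    have hkey : s - ε ≤ density P := by
      rw [my_density_eq]
      apply Filter.le_limsup_of_frequently_le ?_ (my_bdd P)
      rw [Filter.frequently_atTop]
      intro b
      obtain ⟨n, hn⟩ := exists_nat_ge (max b (5/ε))
      refine ⟨R (n+1), ?_, ?_⟩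
      · have h1 := hge n
        have h2 := hRnn n
        have h3 : b ≤ (n:ℝ) := le_trans (le_max_left _ _) hn
        nlinarith
      · have h5 : 5/((n:ℝ)+1) ≤ ε := by
          rw [div_le_iff₀ (by positivity)]
          have h3 : 5/ε ≤ (n:ℝ) := le_trans (le_max_right _ _) hn
          rw [div_le_iff₀ hε] at h3
          nlinarith
        have := hmain n
        linarith
    linarith
  exact ⟨P, hpack, hradii, ⟨P, hpack, hradii, rfl⟩, fun x hx => le_trans (le_csSup hDbdd hx) hsle⟩
end

section
/- For every natural number n ≥ 1, the function mapping a tuple (r₁, …, rₙ) of positive real numbers to the supremum of the densities of packings of the Euclidean plane by disks whose radii all belong to {r₁, …, rₙ} is continuous on (0, ∞)ⁿ. -/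
open Metric Set

namespace MDC

open Filter MeasureTheory Pointwise

noncomputable section

lemma square_eq (R : ℝ) :
    square R = (MeasurableEquiv.toLp 2 (Fin 2 → ℝ)).symm ⁻¹' (Set.univ.pi fun _ => Icc (-R) R) := by
  ext x
  simp only [square, mem_setOf_eq, mem_preimage, Set.mem_pi, mem_univ, forall_true_left,
    MeasurableEquiv.coe_toLp_symm, mem_Icc, abs_le]
  constructor
  · rintro ⟨h0, h1⟩ i
    fin_cases i <;> simpa using by assumption
  · intro h
    exact ⟨h 0, h 1⟩

lemma volume_square {R : ℝ} (hR : 0 ≤ R) :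
    volume (square R) = ENNReal.ofReal (4 * R ^ 2) := by
  rw [square_eq]
  rw [(EuclideanSpace.volume_preserving_symm_measurableEquiv_toLp (Fin 2)).measure_preimage
    (MeasurableSet.univ_pi fun _ => measurableSet_Icc).nullMeasurableSet]
  rw [volume_pi_pi]
  simp only [Real.volume_Icc]
  rw [Finset.prod_const, Finset.card_univ, Fintype.card_fin]
  rw [← ENNReal.ofReal_pow (by linarith)]
  congr 1
  ring

lemma volume_inter_square_le (A : Set Plane) (R : ℝ) :
    volume (A ∩ square R) ≤ ENNReal.ofReal (4 * R ^ 2) := by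
  rcases le_or_gt 0 R with hR | hR
  · exact le_trans (measure_mono inter_subset_right) (volume_square hR).le
  · have : square R = ∅ := by
      ext x
      simp only [square, mem_setOf_eq, mem_empty_iff_false, iff_false, not_and]
      intro h
      linarith [abs_nonneg (x 0)]
    rw [this, inter_empty, measure_empty]
    exact zero_le

/-- The basic density function. -/
def frac (P : Set Disk) (R : ℝ) : ℝ :=
  (volume (packingUnion P ∩ square R)).toReal / (4 * R ^ 2)

lemma density_eq (P : Set Disk) : density P = limsup (frac P) atTop := rfl

lemma frac_nonneg (P : Set Disk) (R : ℝ) : 0 ≤ frac P R :=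
  div_nonneg ENNReal.toReal_nonneg (by positivity)

lemma frac_le_one (P : Set Disk) (R : ℝ) : frac P R ≤ 1 := by
  rcases eq_or_ne R 0 with rfl | hR
  · simp [frac]
  · rw [frac, div_le_one (by positivity)]
    exact ENNReal.toReal_le_of_le_ofReal (by positivity) (volume_inter_square_le _ _)

lemma frac_bddAbove (P : Set Disk) : IsBoundedUnder (· ≤ ·) atTop (frac P) :=
  Filter.isBoundedUnder_of ⟨1, fun x => frac_le_one P x⟩

lemma frac_bddBelow (P : Set Disk) : IsBoundedUnder (· ≥ ·) atTop (frac P) :=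
  Filter.isBoundedUnder_of ⟨0, fun x => frac_nonneg P x⟩

lemma density_nonneg (P : Set Disk) : 0 ≤ density P :=
  le_limsup_of_frequently_le (Frequently.of_forall fun x => frac_nonneg P x) (frac_bddAbove P)

lemma density_le_one (P : Set Disk) : density P ≤ 1 :=
  limsup_le_of_le (frac_bddBelow P).isCoboundedUnder_le
    (Eventually.of_forall fun x => frac_le_one P x)

lemma density_empty : density (∅ : Set Disk) = 0 := by
  have h : packingUnion (∅ : Set Disk) = ∅ := by simp [packingUnion]
  have : frac (∅ : Set Disk) = fun _ => 0 := by
    funext R; simp [frac, h]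
  rw [density_eq, this, limsup_const]

lemma disk_interior (d : Disk) : interior d.set = ball d.center d.radius :=
  interior_closedBall _ (ne_of_gt d.radius_pos)

lemma packing_countable {P : Set Disk} (hP : IsPacking P) : P.Countable := by
  refine Set.PairwiseDisjoint.countable_of_isOpen (s := fun d : Disk => interior d.set)
    (fun d hd d' hd' hne => hP d hd d' hd' hne) (fun d _ => isOpen_interior) (fun d _ => ?_)
  show (interior d.set).Nonempty
  rw [disk_interior]
  exact nonempty_ball.2 d.radius_pos

lemma coord_dist_le (x y : Plane) (i : Fin 2) : dist (x i) (y i) ≤ dist x y := by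
  rw [EuclideanSpace.dist_eq]
  have h : dist (x i) (y i) ^ 2 ≤ ∑ j, dist (x j) (y j) ^ 2 :=
    Finset.single_le_sum (f := fun j => dist (x j) (y j) ^ 2)
      (fun j _ => sq_nonneg _) (Finset.mem_univ i)
  calc dist (x i) (y i) = Real.sqrt (dist (x i) (y i) ^ 2) := (Real.sqrt_sq dist_nonneg).symm
    _ ≤ _ := Real.sqrt_le_sqrt h

lemma shrink {P : Set Disk} {F : Disk → Disk} {c a : ℝ} (hP : IsPacking P)
    (hc : 0 < c) (hc1 : c ≤ 1) (ha : 0 < a)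
    (hcen : ∀ d ∈ P, (F d).center = d.center)
    (hle : ∀ d ∈ P, (F d).radius ≤ d.radius)
    (hge : ∀ d ∈ P, c * d.radius ≤ (F d).radius)
    (hrad : ∀ d ∈ P, d.radius ≤ a) :
    IsPacking (F '' P) ∧ c ^ 2 * density P ≤ density (F '' P) := by
  have hsub : ∀ d ∈ P, ball (F d).center (F d).radius ⊆ interior d.set := by
    intro d hd
    rw [disk_interior, ← hcen d hd]
    exact ball_subset_ball (hle d hd)
  have hpack : IsPacking (F '' P) := by
    rintro e ⟨d, hd, rfl⟩ e' ⟨d', hd', rfl⟩ hne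
    have hdd : d ≠ d' := by rintro rfl; exact hne rfl
    have h := hP d hd d' hd' hdd
    rw [disk_interior (F d), disk_interior (F d')]
    exact h.mono (hsub d hd) (hsub d' hd')
  refine ⟨hpack, ?_⟩
  -- the measure-theoretic core
  have key : ∀ R : ℝ, 0 ≤ R →
      ENNReal.ofReal (c ^ 2) * volume (packingUnion P ∩ square R)
        ≤ volume (packingUnion (F '' P) ∩ square (R + 2 * a)) := by
    intro R hR
    set Q := {d ∈ P | (d.set ∩ square R).Nonempty} with hQdef
    have hQP : Q ⊆ P := sep_subset _ _
    have hQc : Q.Countable := (packing_countable hP).mono hQP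
    have h1 : packingUnion P ∩ square R ⊆ ⋃ d ∈ Q, d.set := by
      rintro x ⟨hx, hxs⟩
      rw [packingUnion, mem_iUnion₂] at hx
      obtain ⟨d, hd, hxd⟩ := hx
      exact mem_iUnion₂.2 ⟨d, ⟨hd, ⟨x, hxd, hxs⟩⟩, hxd⟩
    have h2 : volume (packingUnion P ∩ square R) ≤ ∑' d : Q, volume (d : Disk).set :=
      le_trans (measure_mono h1) (measure_biUnion_le volume hQc _)
    have hball : ∀ d : Disk, volume (ball (F d).center (F d).radius)
        = ENNReal.ofReal ((F d).radius ^ 2) * volume (ball (0 : Plane) 1) := by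
      intro d
      have := MeasureTheory.Measure.addHaar_ball (volume : MeasureTheory.Measure Plane)
        (F d).center (le_of_lt (F d).radius_pos)
      rwa [finrank_euclideanSpace_fin] at this
    have hcb : ∀ d : Disk, volume d.set
        = ENNReal.ofReal (d.radius ^ 2) * volume (ball (0 : Plane) 1) := by
      intro d
      have := MeasureTheory.Measure.addHaar_closedBall (volume : MeasureTheory.Measure Plane)
        d.center (le_of_lt d.radius_pos)
      rwa [finrank_euclideanSpace_fin] at this
    have hdisj : Q.PairwiseDisjoint (fun d => ball (F d).center (F d).radius) := by
      intro d hd d' hd' hne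
      exact (hP d (hQP hd) d' (hQP hd') hne).mono (hsub d (hQP hd)) (hsub d' (hQP hd'))
    have h3 : ∑' d : Q, volume (ball (F (d : Disk)).center (F (d : Disk)).radius)
        = volume (⋃ d ∈ Q, ball (F d).center (F d).radius) :=
      (MeasureTheory.measure_biUnion hQc hdisj (fun d _ => measurableSet_ball)).symm
    have h4 : (⋃ d ∈ Q, ball (F d).center (F d).radius)
        ⊆ packingUnion (F '' P) ∩ square (R + 2 * a) := by
      refine iUnion₂_subset fun d hd => subset_inter ?_ ?_
      · refine subset_trans ball_subset_closedBall ?_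
        exact subset_iUnion₂ (s := fun (e : Disk) (_ : e ∈ F '' P) => e.set)
          (F d) ⟨d, hQP hd, rfl⟩
      · intro x hx
        obtain ⟨y, hyd, hys⟩ := hd.2
        have hxy : dist x y ≤ 2 * a := by
          have h5 : dist x (F d).center < (F d).radius := mem_ball.1 hx
          rw [hcen d hd.1] at h5
          have h6 : dist y d.center ≤ d.radius := mem_closedBall.1 hyd
          have h7 : d.radius ≤ a := hrad d hd.1
          have h8 := hle d hd.1
          calc dist x y ≤ dist x d.center + dist d.center y := dist_triangle x d.center y
            _ ≤ (F d).radius + d.radius := by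
                rw [dist_comm d.center y]; exact add_le_add h5.le h6
            _ ≤ 2 * a := by linarith
        have hcoord : ∀ i : Fin 2, |x i| ≤ R + 2 * a := by
          intro i
          have h9 : dist (x i) (y i) ≤ 2 * a := le_trans (coord_dist_le x y i) hxy
          have h10 : |y i| ≤ R := by
            fin_cases i
            · exact hys.1
            · exact hys.2
          calc |x i| = |y i + (x i - y i)| := by ring_nf
            _ ≤ |y i| + |x i - y i| := abs_add_le _ _
            _ ≤ R + 2 * a := add_le_add h10 (by rwa [Real.dist_eq] at h9)
        exact ⟨hcoord 0, hcoord 1⟩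
    calc ENNReal.ofReal (c ^ 2) * volume (packingUnion P ∩ square R)
        ≤ ENNReal.ofReal (c ^ 2) * ∑' d : Q, volume (d : Disk).set := mul_le_mul_right h2 _
      _ = ∑' d : Q, ENNReal.ofReal (c ^ 2) * volume (d : Disk).set := ENNReal.tsum_mul_left.symm
      _ ≤ ∑' d : Q, volume (ball (F (d : Disk)).center (F (d : Disk)).radius) := by
          refine ENNReal.tsum_le_tsum fun d => ?_
          rw [hcb d, hball d, ← mul_assoc, ← ENNReal.ofReal_mul (sq_nonneg c)]
          refine mul_le_mul_left (ENNReal.ofReal_le_ofReal ?_) _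
          have h11 : c * (d : Disk).radius ≤ (F (d : Disk)).radius := hge d d.2.1
          have h12 : 0 ≤ c * (d : Disk).radius :=
            mul_nonneg hc.le (d : Disk).radius_pos.le
          calc c ^ 2 * (d : Disk).radius ^ 2 = (c * (d : Disk).radius) ^ 2 := by ring
            _ ≤ (F (d : Disk)).radius ^ 2 := pow_le_pow_left₀ h12 h11 2
      _ = volume (⋃ d ∈ Q, ball (F d).center (F d).radius) := h3
      _ ≤ volume (packingUnion (F '' P) ∩ square (R + 2 * a)) := measure_mono h4
  -- frac inequality
  have frakey : ∀ R : ℝ, 0 < R →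
      c ^ 2 * frac P R * (R ^ 2 / (R + 2 * a) ^ 2) ≤ frac (F '' P) (R + 2 * a) := by
    intro R hR
    have hRa : 0 < R + 2 * a := by linarith
    have hv' : volume (packingUnion (F '' P) ∩ square (R + 2 * a)) ≠ ⊤ :=
      (lt_of_le_of_lt (volume_inter_square_le _ _) ENNReal.ofReal_lt_top).ne
    have htr : c ^ 2 * (volume (packingUnion P ∩ square R)).toReal
        ≤ (volume (packingUnion (F '' P) ∩ square (R + 2 * a))).toReal := by
      calc c ^ 2 * (volume (packingUnion P ∩ square R)).toReal
          = (ENNReal.ofReal (c ^ 2) * volume (packingUnion P ∩ square R)).toReal := by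
            rw [ENNReal.toReal_mul, ENNReal.toReal_ofReal (sq_nonneg c)]
        _ ≤ _ := ENNReal.toReal_mono hv' (key R hR.le)
    rw [frac, frac]
    have heq : c ^ 2 * ((volume (packingUnion P ∩ square R)).toReal / (4 * R ^ 2))
        * (R ^ 2 / (R + 2 * a) ^ 2)
        = (c ^ 2 * (volume (packingUnion P ∩ square R)).toReal) / (4 * (R + 2 * a) ^ 2) := by
      field_simp
    rw [heq]
    exact div_le_div_of_nonneg_right htr (by positivity)
  -- limsup part
  have hT : Filter.Tendsto (fun R : ℝ => R ^ 2 / (R + 2 * a) ^ 2) atTop (nhds 1) := by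
    have h1 : Filter.Tendsto (fun R : ℝ => R / (R + 2 * a)) atTop (nhds 1) := by
      have hco : (fun R : ℝ => R / (R + 2 * a)) =ᶠ[atTop] fun R => 1 - (2 * a) / (R + 2 * a) := by
        filter_upwards [eventually_gt_atTop 0] with R hR
        have hne : R + 2 * a ≠ 0 := by positivity
        field_simp
        ring
      rw [Filter.tendsto_congr' hco]
      have h2 : Filter.Tendsto (fun R : ℝ => (2 * a) / (R + 2 * a)) atTop (nhds 0) :=
        Filter.Tendsto.div_atTop tendsto_const_nhds
          (Filter.tendsto_atTop_add_const_right _ _ Filter.tendsto_id)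
      simpa using tendsto_const_nhds.sub h2
    have h3 := h1.pow 2
    simp only [one_pow, div_pow] at h3
    exact h3
  rw [density_eq, density_eq]
  refine le_of_forall_lt_imp_le_of_dense fun b hb => ?_
  set L := limsup (frac P) atTop with hL
  have hc2 : (0 : ℝ) < c ^ 2 := by positivity
  have hbL : b / c ^ 2 < L := (div_lt_iff₀ hc2).2 (by rw [mul_comm]; exact hb)
  set t := (b / c ^ 2 + L) / 2 with ht
  have ht1 : b / c ^ 2 < t := by rw [ht]; linarith
  have ht2 : t < L := by rw [ht]; linarith
  have hbt : b < c ^ 2 * t := by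
    have := (div_lt_iff₀ hc2).1 ht1
    linarith [this]
  have hfreq : ∃ᶠ R in atTop, t < frac P R :=
    frequently_lt_of_lt_limsup (frac_bddBelow P).isCoboundedUnder_le ht2
  have hev : ∀ᶠ R in atTop, b < c ^ 2 * t * (R ^ 2 / (R + 2 * a) ^ 2) := by
    have h5 : Filter.Tendsto (fun R : ℝ => c ^ 2 * t * (R ^ 2 / (R + 2 * a) ^ 2)) atTop
        (nhds (c ^ 2 * t)) := by
      simpa using tendsto_const_nhds.mul hT
    exact h5.eventually_const_lt hbt
  have hfreq2 : ∃ᶠ R in atTop, b ≤ frac (F '' P) (R + 2 * a) := by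
    refine (hfreq.and_eventually (hev.and (eventually_gt_atTop 0))).mono ?_
    rintro R ⟨h1, h2, h3⟩
    calc b ≤ c ^ 2 * t * (R ^ 2 / (R + 2 * a) ^ 2) := h2.le
      _ ≤ c ^ 2 * frac P R * (R ^ 2 / (R + 2 * a) ^ 2) :=
          mul_le_mul_of_nonneg_right
            (mul_le_mul_of_nonneg_left h1.le (sq_nonneg c)) (by positivity)
      _ ≤ frac (F '' P) (R + 2 * a) := frakey R h3
  have hmap : Filter.map (fun R : ℝ => R + 2 * a) atTop = atTop := by
    have : ⇑(OrderIso.addRight (2 * a)) = fun x : ℝ => x + 2 * a := rfl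
    rw [← this]
    exact (OrderIso.addRight (2 * a)).map_atTop
  have hfreq3 : ∃ᶠ S in atTop, b ≤ frac (F '' P) S := by
    rw [← hmap, Filter.frequently_map]
    exact hfreq2
  exact le_limsup_of_frequently_le hfreq3 (frac_bddAbove _)

/-- Scaling a disk. -/
def scaleD (l : ℝ) (hl : 0 < l) (d : Disk) : Disk :=
  ⟨l • d.center, l * d.radius, mul_pos hl d.radius_pos⟩

lemma scaleD_set (l : ℝ) (hl : 0 < l) (d : Disk) : (scaleD l hl d).set = l • d.set := by
  rw [Disk.set, Disk.set, smul_closedBall l d.center d.radius_pos.le]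
  show closedBall (l • d.center) (l * d.radius) = closedBall (l • d.center) (‖l‖ * d.radius)
  rw [Real.norm_eq_abs, abs_of_pos hl]

lemma scale_union (l : ℝ) (hl : 0 < l) (P : Set Disk) :
    packingUnion (scaleD l hl '' P) = l • packingUnion P := by
  rw [packingUnion, packingUnion, biUnion_image]
  ext x
  simp only [mem_iUnion₂, scaleD_set l hl, mem_smul_set_iff_inv_smul_mem₀ (ne_of_gt hl)]

lemma scale_square (l : ℝ) (hl : 0 < l) (R : ℝ) : square (l * R) = l • square R := by
  ext x
  rw [mem_smul_set_iff_inv_smul_mem₀ (ne_of_gt hl)]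
  have hx : ∀ i : Fin 2, (l⁻¹ • x) i = l⁻¹ * x i := fun i => rfl
  have key : ∀ t : ℝ, |l⁻¹ * t| ≤ R ↔ |t| ≤ l * R := by
    intro t
    rw [abs_mul, abs_inv, abs_of_pos hl, inv_mul_le_iff₀ hl]
  simp only [square, mem_setOf_eq, hx, key]

lemma frac_scale (l : ℝ) (hl : 0 < l) (P : Set Disk) (R : ℝ) :
    frac (scaleD l hl '' P) R = frac P (R / l) := by
  rcases eq_or_ne R 0 with rfl | hR
  · simp [frac]
  · have hlR : l * (R / l) = R := by field_simp
    have h1 : packingUnion (scaleD l hl '' P) ∩ square R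
        = l • (packingUnion P ∩ square (R / l)) := by
      rw [smul_set_inter₀ (ne_of_gt hl), scale_union, ← scale_square l hl (R / l), hlR]
    rw [frac, frac, h1, MeasureTheory.Measure.addHaar_smul, finrank_euclideanSpace_fin,
      ENNReal.toReal_mul, ENNReal.toReal_ofReal (abs_nonneg _)]
    have hl2 : |l ^ 2| = l ^ 2 := abs_of_pos (by positivity)
    rw [hl2]
    have hRl : R / l ≠ 0 := div_ne_zero hR (ne_of_gt hl)
    field_simp

lemma density_scale (l : ℝ) (hl : 0 < l) (P : Set Disk) :
    density (scaleD l hl '' P) = density P := by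
  rw [density_eq, density_eq]
  have h1 : frac (scaleD l hl '' P) = (frac P) ∘ (fun R : ℝ => R * l⁻¹) := by
    funext R
    rw [Function.comp_apply, frac_scale, div_eq_mul_inv]
  rw [h1, limsup_comp]
  congr 1
  have h2 : ⇑(OrderIso.mulRight₀ l⁻¹ (inv_pos.2 hl)) = fun R : ℝ => R * l⁻¹ := rfl
  rw [← h2, OrderIso.map_atTop]

lemma scaleD_injective (l : ℝ) (hl : 0 < l) : Function.Injective (scaleD l hl) := by
  rintro ⟨x, s, hs⟩ ⟨y, t, ht⟩ h
  rw [scaleD, scaleD, Disk.mk.injEq] at h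
  rw [Disk.mk.injEq]
  exact ⟨smul_right_injective _ (ne_of_gt hl) h.1, mul_left_cancel₀ (ne_of_gt hl) h.2⟩

lemma scale_packing (l : ℝ) (hl : 0 < l) {P : Set Disk} (hP : IsPacking P) :
    IsPacking (scaleD l hl '' P) := by
  rintro e ⟨d, hd, rfl⟩ e' ⟨d', hd', rfl⟩ hne
  have hdd : d ≠ d' := fun h => hne (by rw [h])
  have h := hP d hd d' hd' hdd
  have hi : ∀ d : Disk, interior (scaleD l hl d).set = l • interior d.set := by
    intro d
    rw [scaleD_set, interior_smul₀ (ne_of_gt hl)]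
  rw [hi, hi, ← image_smul, ← image_smul]
  exact Set.disjoint_image_of_injective (smul_right_injective _ (ne_of_gt hl)) h

/-- The set of achievable densities. -/
def Sset (n : ℕ) (r : Fin n → ℝ) : Set ℝ :=
  {x : ℝ | ∃ P : Set Disk, IsPacking P ∧ RadiiIn P (Set.range r) ∧ density P = x}

lemma zero_mem_Sset (n : ℕ) (r : Fin n → ℝ) : (0 : ℝ) ∈ Sset n r :=
  ⟨∅, fun d hd => absurd hd (notMem_empty d), fun d hd => absurd hd (notMem_empty d),
    density_empty⟩

lemma Sset_bddAbove (n : ℕ) (r : Fin n → ℝ) : BddAbove (Sset n r) := by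
  refine ⟨1, ?_⟩
  rintro x ⟨P, _, _, rfl⟩
  exact density_le_one P

lemma M_nonneg (n : ℕ) (r : Fin n → ℝ) : 0 ≤ sSup (Sset n r) :=
  le_csSup (Sset_bddAbove n r) (zero_mem_Sset n r)

lemma M_le_one (n : ℕ) (r : Fin n → ℝ) : sSup (Sset n r) ≤ 1 := by
  refine csSup_le ⟨0, zero_mem_Sset n r⟩ ?_
  rintro x ⟨P, _, _, rfl⟩
  exact density_le_one P

lemma Sset_scale_subset (n : ℕ) (l : ℝ) (hl : 0 < l) (r : Fin n → ℝ) :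
    Sset n r ⊆ Sset n (fun i => l * r i) := by
  rintro x ⟨P, hP, hrad, rfl⟩
  refine ⟨scaleD l hl '' P, scale_packing l hl hP, ?_, density_scale l hl P⟩
  rintro e ⟨d, hd, rfl⟩
  obtain ⟨i, hi⟩ := hrad d hd
  exact ⟨i, by show l * r i = (scaleD l hl d).radius; rw [hi]; rfl⟩

lemma M_scale (n : ℕ) (l : ℝ) (hl : 0 < l) (r : Fin n → ℝ) :
    sSup (Sset n (fun i => l * r i)) = sSup (Sset n r) := by
  apply le_antisymm
  · refine csSup_le ⟨0, zero_mem_Sset n _⟩ fun x hx => ?_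
    have h1 := Sset_scale_subset n l⁻¹ (inv_pos.2 hl) (fun i => l * r i) hx
    have heq : (fun i => l⁻¹ * (l * r i)) = r := by
      funext i
      field_simp
    rw [heq] at h1
    exact le_csSup (Sset_bddAbove n r) h1
  · exact csSup_le ⟨0, zero_mem_Sset n _⟩ fun x hx =>
      le_csSup (Sset_bddAbove n _) (Sset_scale_subset n l hl r hx)

lemma key_le {n : ℕ} (r r' : Fin n → ℝ) (hr : ∀ i, 0 < r i) (hr' : ∀ i, 0 < r' i)
    (l c : ℝ) (hl : 0 < l) (hc : 0 < c) (hc1 : c ≤ 1)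
    (h1 : ∀ i, l * r' i ≤ r i) (h2 : ∀ i, c * r i ≤ l * r' i) :
    c ^ 2 * sSup (Sset n r) ≤ sSup (Sset n r') := by
  rw [← M_scale n l hl r']
  set B := sSup (Sset n (fun i => l * r' i)) with hB
  have hmain : ∀ x ∈ Sset n r, c ^ 2 * x ≤ B := by
    rintro x ⟨P, hP, hrad, rfl⟩
    set a := 1 + ∑ j, |r j| with ha
    have ha0 : 0 < a := by positivity
    have hra : ∀ i, r i ≤ a := by
      intro i
      have h3 : r i ≤ |r i| := le_abs_self _
      have h4 : |r i| ≤ ∑ j, |r j| :=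
        Finset.single_le_sum (f := fun j => |r j|) (fun j _ => abs_nonneg _) (Finset.mem_univ i)
      linarith
    set F : Disk → Disk := fun d =>
      if h : ∃ i, d.radius = r i then ⟨d.center, l * r' h.choose, mul_pos hl (hr' _)⟩ else d
      with hF
    have hex : ∀ d ∈ P, ∃ i, d.radius = r i := by
      intro d hd
      obtain ⟨i, hi⟩ := hrad d hd
      exact ⟨i, hi.symm⟩
    have hFd : ∀ d, ∀ hd : d ∈ P, F d = ⟨d.center, l * r' (hex d hd).choose,
        mul_pos hl (hr' _)⟩ := fun d hd => dif_pos (hex d hd)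
    have hFc : ∀ d ∈ P, (F d).center = d.center := by
      intro d hd
      rw [hFd d hd]
    have hle : ∀ d ∈ P, (F d).radius ≤ d.radius := by
      intro d hd
      rw [hFd d hd]
      show l * r' (hex d hd).choose ≤ d.radius
      have h5 : l * r' (hex d hd).choose ≤ r ((hex d hd).choose) := h1 _
      have h6 : d.radius = r ((hex d hd).choose) := (hex d hd).choose_spec
      linarith
    have hge : ∀ d ∈ P, c * d.radius ≤ (F d).radius := by
      intro d hd
      rw [hFd d hd]
      show c * d.radius ≤ l * r' (hex d hd).choose
      have h5 : c * r ((hex d hd).choose) ≤ l * r' (hex d hd).choose := h2 _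
      have h6 : d.radius = r ((hex d hd).choose) := (hex d hd).choose_spec
      exact (congrArg (fun t => c * t) h6).trans_le h5
    have hbd : ∀ d ∈ P, d.radius ≤ a := by
      intro d hd
      obtain ⟨i, hi⟩ := hex d hd
      rw [hi]
      exact hra i
    obtain ⟨hpack, hdens⟩ := shrink hP hc hc1 ha0 hFc hle hge hbd
    have hradF : RadiiIn (F '' P) (Set.range fun i => l * r' i) := by
      rintro e ⟨d, hd, rfl⟩
      rw [hFd d hd]
      exact ⟨(hex d hd).choose, rfl⟩
    have hmem : density (F '' P) ∈ Sset n (fun i => l * r' i) := ⟨F '' P, hpack, hradF, rfl⟩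
    exact le_trans hdens (le_csSup (Sset_bddAbove n _) hmem)
  have hc2 : (0 : ℝ) < c ^ 2 := by positivity
  have hMr : sSup (Sset n r) ≤ B / c ^ 2 :=
    csSup_le ⟨0, zero_mem_Sset n r⟩ fun x hx =>
      (le_div_iff₀ hc2).2 (by rw [mul_comm]; exact hmain x hx)
  calc c ^ 2 * sSup (Sset n r) ≤ c ^ 2 * (B / c ^ 2) :=
        mul_le_mul_of_nonneg_left hMr (by positivity)
    _ = B := by field_simp

end

end MDC

/-- the maximum density, as a function of the tuple of radii, is
continuous on `(0, ∞)ⁿ`. -/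
theorem max_density_continuous (n : ℕ) (hn : 1 ≤ n) :
    ContinuousOn
      (fun r : Fin n → ℝ =>
        sSup {x : ℝ | ∃ P : Set Disk, IsPacking P ∧ RadiiIn P (Set.range r) ∧ density P = x})
      {r : Fin n → ℝ | ∀ i, 0 < r i} := by
  intro r₀ hr₀
  rw [Metric.continuousWithinAt_iff]
  intro ε hε
  haveI : Nonempty (Fin n) := ⟨⟨0, hn⟩⟩
  have hr₀' : ∀ i, 0 < r₀ i := hr₀
  set m := Finset.univ.inf' Finset.univ_nonempty r₀ with hm
  have hm0 : 0 < m := (Finset.lt_inf'_iff _).2 fun i _ => hr₀' i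
  have hmle : ∀ i, m ≤ r₀ i := fun i => Finset.inf'_le _ (Finset.mem_univ i)
  set δ := min (m / 2) (ε * m / 8) with hδdef
  have hδ0 : 0 < δ := lt_min (by positivity) (by positivity)
  have hδm : δ < m := lt_of_le_of_lt (min_le_left _ _) (by linarith)
  have hδε : δ ≤ ε * m / 8 := min_le_right _ _
  refine ⟨δ, hδ0, ?_⟩
  intro r hr hdist
  have hri : ∀ i, 0 < r i := hr
  have hclose : ∀ i, |r i - r₀ i| < δ := by
    intro i
    have h := (dist_pi_lt_iff hδ0).1 hdist i
    rwa [Real.dist_eq] at h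
  have hup : ∀ i, r i ≤ r₀ i + δ := fun i => by
    have := (abs_lt.1 (hclose i)).2; linarith
  have hlo : ∀ i, r₀ i - δ ≤ r i := fun i => by
    have := (abs_lt.1 (hclose i)).1; linarith
  set c := (m - δ) / (m + δ) with hc
  have hmδ : 0 < m + δ := by linarith
  have hc0 : 0 < c := div_pos (by linarith) hmδ
  have hc1 : c ≤ 1 := (div_le_one hmδ).2 (by linarith)
  -- A : c² M(r₀) ≤ M(r), shrinking packings with radii r₀ towards radii l • r
  have hA : c ^ 2 * sSup (MDC.Sset n r₀) ≤ sSup (MDC.Sset n r) := by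
    refine MDC.key_le r₀ r hr₀' hri (m / (m + δ)) c (by positivity) hc0 hc1 ?_ ?_
    · intro i
      rw [div_mul_eq_mul_div, div_le_iff₀ hmδ]
      have f1 : m * r i ≤ m * (r₀ i + δ) := mul_le_mul_of_nonneg_left (hup i) hm0.le
      have f2 : δ * m ≤ δ * r₀ i := mul_le_mul_of_nonneg_left (hmle i) hδ0.le
      nlinarith [f1, f2]
    · intro i
      rw [hc, div_mul_eq_mul_div, div_mul_eq_mul_div, div_le_div_iff₀ hmδ hmδ]
      have e1 : m * (r₀ i - δ) ≤ m * r i := mul_le_mul_of_nonneg_left (hlo i) hm0.le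
      have e2 : δ * m ≤ δ * r₀ i := mul_le_mul_of_nonneg_left (hmle i) hδ0.le
      have e3 : (m - δ) * r₀ i ≤ m * r i := by nlinarith [e1, e2]
      have e4 := mul_le_mul_of_nonneg_right e3 hmδ.le
      nlinarith [e4]
  -- B : c² M(r) ≤ M(r₀)
  have hB : c ^ 2 * sSup (MDC.Sset n r) ≤ sSup (MDC.Sset n r₀) := by
    refine MDC.key_le r r₀ hri hr₀' ((m - δ) / m) c
      (div_pos (by linarith) hm0) hc0 hc1 ?_ ?_
    · intro i
      rw [div_mul_eq_mul_div, div_le_iff₀ hm0]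
      have e1 : m * (r₀ i - δ) ≤ m * r i := mul_le_mul_of_nonneg_left (hlo i) hm0.le
      have e2 : δ * m ≤ δ * r₀ i := mul_le_mul_of_nonneg_left (hmle i) hδ0.le
      nlinarith [e1, e2]
    · intro i
      rw [hc, div_mul_eq_mul_div, div_mul_eq_mul_div, div_le_div_iff₀ hmδ hm0]
      have f1 : m * r i ≤ m * (r₀ i + δ) := mul_le_mul_of_nonneg_left (hup i) hm0.le
      have f2 : δ * m ≤ δ * r₀ i := mul_le_mul_of_nonneg_left (hmle i) hδ0.le
      have f3 : r i * m ≤ r₀ i * (m + δ) := by nlinarith [f1, f2]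
      have f4 := mul_le_mul_of_nonneg_left f3 (show (0:ℝ) ≤ m - δ by linarith)
      nlinarith [f4]
  have hM1 : sSup (MDC.Sset n r) ≤ 1 := MDC.M_le_one n r
  have hM0 : 0 ≤ sSup (MDC.Sset n r) := MDC.M_nonneg n r
  have hM1' : sSup (MDC.Sset n r₀) ≤ 1 := MDC.M_le_one n r₀
  have hM0' : 0 ≤ sSup (MDC.Sset n r₀) := MDC.M_nonneg n r₀
  have hcsq : c ^ 2 ≤ 1 := by nlinarith
  show dist (sSup (MDC.Sset n r)) (sSup (MDC.Sset n r₀)) < ε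
  rw [Real.dist_eq]
  generalize hX : sSup (MDC.Sset n r) = X at hA hB hM1 hM0 ⊢
  generalize hY : sSup (MDC.Sset n r₀) = Y at hA hB hM1' hM0' ⊢
  clear hX hY hdist hclose hup hlo hri hr
  have hcge : 1 - 2 * δ / m ≤ c := by
    rw [hc, le_div_iff₀ hmδ]
    have h12 : (1 - 2 * δ / m) * (m + δ) = m - δ - 2 * δ ^ 2 / m := by
      field_simp
      ring
    rw [h12]
    have h13 : 0 ≤ 2 * δ ^ 2 / m := by positivity
    linarith
  have hfin : 1 - c ^ 2 < ε := by
    have h10 : 1 - c ≤ 2 * δ / m := by linarith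
    have h11 : 2 * δ / m ≤ ε / 4 := by
      rw [div_le_iff₀ hm0]
      linarith [hδε]
    have h12 : (1 - c) * (1 + c) ≤ (ε / 4) * 2 :=
      mul_le_mul (by linarith) (by linarith) (by linarith) (by linarith)
    nlinarith [h12]
  have habs : |X - Y| ≤ 1 - c ^ 2 := by
    rw [abs_le]
    constructor
    · have u1 : (1 - c ^ 2) * Y ≤ (1 - c ^ 2) * 1 :=
        mul_le_mul_of_nonneg_left hM1' (by linarith)
      linarith [u1, hA]
    · have u2 : (1 - c ^ 2) * X ≤ (1 - c ^ 2) * 1 :=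
        mul_le_mul_of_nonneg_left hM1 (by linarith)
      linarith [u2, hB]
  linarith [habs, hfin]
end

section
/- Let r > 0 and let c₁, …, c₅ be points of the Euclidean plane, each at distance 1 + r from the origin, such that the five closed unit disks centered at c₁, …, c₅ have pairwise disjoint interiors, consecutive disks are tangent (‖cᵢ − cᵢ₊₁‖ = 2 for i = 1, …, 5, indices modulo 5), and the five angles at the origin between consecutive centers sum to 2π (i.e., the corona of five unit disks closes up around the central disk of radius r). Then r = 2√2/√(5 − √5) − 1. -/
open Metric Set

/-- if five unit disks form a closed corona around a central disk of
radius `r`, then `r = 2√2/√(5 − √5) − 1`. -/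
theorem corona_five_unit_disks (r : ℝ) (hr : 0 < r) (c : Fin 5 → Plane)
    (hdist : ∀ i, dist (c i) (0 : Plane) = 1 + r)
    (hdisj : ∀ i j, i ≠ j →
      Disjoint (interior (closedBall (c i) 1)) (interior (closedBall (c j) 1)))
    (htang : ∀ i : Fin 5, dist (c i) (c (i + 1)) = 2)
    (hangle : ∑ i : Fin 5, EuclideanGeometry.angle (c i) (0 : Plane) (c (i + 1))
        = 2 * Real.pi) :
    r = 2 * Real.sqrt 2 / Real.sqrt (5 - Real.sqrt 5) - 1 := by
  set s := 1 + r with hs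
  have hspos : 0 < s := by simp [hs]; linarith
  have hcos : ∀ i : Fin 5,
      Real.cos (EuclideanGeometry.angle (c i) (0 : Plane) (c (i + 1))) = 1 - 2 / s ^ 2 := by
    intro i
    have h := EuclideanGeometry.law_cos (c i) (0 : Plane) (c (i + 1))
    rw [htang i, hdist i, hdist (i + 1)] at h
    have hs2 : s ^ 2 ≠ 0 := by positivity
    field_simp
    nlinarith [h]
  have hangeq : ∀ i : Fin 5, EuclideanGeometry.angle (c i) (0 : Plane) (c (i + 1))
      = EuclideanGeometry.angle (c 0) (0 : Plane) (c 1) := by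
    intro i
    refine Real.injOn_cos ⟨EuclideanGeometry.angle_nonneg _ _ _, EuclideanGeometry.angle_le_pi _ _ _⟩
      ⟨EuclideanGeometry.angle_nonneg _ _ _, EuclideanGeometry.angle_le_pi _ _ _⟩ ?_
    rw [hcos i]
    have := hcos 0
    simpa using this.symm
  have hsum : (5 : ℝ) * EuclideanGeometry.angle (c 0) (0 : Plane) (c 1) = 2 * Real.pi := by
    rw [← hangle, Finset.sum_congr rfl fun i _ => hangeq i]
    simp [Finset.sum_const]
  have hθ : EuclideanGeometry.angle (c 0) (0 : Plane) (c 1) = 2 * Real.pi / 5 := by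
    linarith
  have h5 : Real.sqrt 5 ^ 2 = 5 := Real.sq_sqrt (by norm_num)
  have h5nn : 0 ≤ Real.sqrt 5 := Real.sqrt_nonneg 5
  have h5lt : Real.sqrt 5 < 3 := by nlinarith
  have hcos25 : Real.cos (2 * Real.pi / 5) = (Real.sqrt 5 - 1) / 4 := by
    have h2 : 2 * Real.pi / 5 = 2 * (Real.pi / 5) := by ring
    rw [h2, Real.cos_two_mul, Real.cos_pi_div_five]
    nlinarith
  have hc0 := hcos 0
  rw [show ((0 : Fin 5) + 1) = 1 from rfl, hθ, hcos25] at hc0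
  have hs2pos : (0 : ℝ) < s ^ 2 := by positivity
  have hseq : s ^ 2 * (5 - Real.sqrt 5) = 8 := by
    field_simp at hc0
    nlinarith
  set t := 2 * Real.sqrt 2 / Real.sqrt (5 - Real.sqrt 5) with ht
  have h5s : (0 : ℝ) < 5 - Real.sqrt 5 := by nlinarith
  have htpos : 0 < t := by
    apply div_pos
    · have : (0:ℝ) < Real.sqrt 2 := Real.sqrt_pos.2 (by norm_num)
      linarith
    · exact Real.sqrt_pos.2 h5s
  have ht2 : t ^ 2 * (5 - Real.sqrt 5) = 8 := by
    rw [ht, div_pow, mul_pow, Real.sq_sqrt (by norm_num : (0:ℝ) ≤ 2),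
      Real.sq_sqrt h5s.le]
    field_simp
    norm_num
  have hst : s = t := by
    have h0 : (s - t) * (s + t) = 0 := by nlinarith
    rcases mul_eq_zero.1 h0 with h | h
    · linarith
    · linarith
  linarith [hst]
end

section
/- Let P be a packing of the Euclidean plane by closed disks of radius 1 such that every disk of P is tangent to exactly 6 other disks of P. Then the set of centers of the disks of P is the image of the triangular lattice {a·(2,0) + b·(1,√3) : a, b ∈ ℤ} under an isometry of the plane; in other words, the hexagonal compact packing is the unique compact packing by disks of a single size. -/
open Metric Set

/-- A center of the hexagonal compact packing: `a • (2, 0) + b • (1, √3)`. -/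
noncomputable def hexCenter (a b : ℤ) : Plane :=
  (WithLp.equiv 2 (Fin 2 → ℝ)).symm ![2 * a + b, Real.sqrt 3 * b]

private noncomputable def hexω : ℂ := Complex.exp (Real.pi/3 * Complex.I)

private lemma hexω_eq : hexω = Complex.exp ((Real.pi/3 : ℝ) * Complex.I) := by
  rw [hexω]; norm_num

private lemma hexω_val : hexω = (1 + Real.sqrt 3 * Complex.I) / 2 := by
  rw [hexω_eq]
  apply Complex.ext
  · rw [Complex.exp_ofReal_mul_I_re, Real.cos_pi_div_three]
    simp [Complex.div_re, Complex.normSq_apply]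
  · rw [Complex.exp_ofReal_mul_I_im, Real.sin_pi_div_three]
    simp [Complex.div_im, Complex.normSq_apply]

private lemma sqrt3_sq : (Real.sqrt 3 : ℂ)^2 = 3 := by
  norm_cast
  exact_mod_cast Real.sq_sqrt (by norm_num)

private lemma hexω_sq : hexω^2 = hexω - 1 := by
  rw [hexω_val]
  linear_combination (Complex.I^2/4) * sqrt3_sq + (3/4 : ℂ) * Complex.I_sq

private lemma hexω_cube : hexω^3 = -1 := by
  have h := hexω_sq
  calc hexω^3 = hexω * hexω^2 := by ring
    _ = hexω * (hexω - 1) := by rw [h]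
    _ = hexω^2 - hexω := by ring
    _ = -1 := by rw [h]; ring

private lemma hexω_abs : ‖hexω‖ = 1 := by
  rw [hexω_eq]; exact Complex.norm_exp_ofReal_mul_I _


private lemma normSq_exp_sub (a b : ℝ) :
    Complex.normSq (Complex.exp (a*Complex.I) - Complex.exp (b*Complex.I))
      = 2 - 2*Real.cos (a-b) := by
  rw [Complex.normSq_apply]
  simp [Complex.sub_re, Complex.sub_im, Complex.exp_ofReal_mul_I_re,
    Complex.exp_ofReal_mul_I_im]
  rw [Real.cos_sub]
  nlinarith [Real.sin_sq_add_cos_sq a, Real.sin_sq_add_cos_sq b]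

private lemma half_lt_cos {d : ℝ} (hd : |d| < Real.pi/3) : 1/2 < Real.cos d := by
  rw [← Real.cos_abs]
  have := Real.cos_lt_cos_of_nonneg_of_le_pi (abs_nonneg d)
    (by linarith [Real.pi_pos] : Real.pi/3 ≤ Real.pi) hd
  rw [Real.cos_pi_div_three] at this
  linarith

private lemma hex_rotate {S : Set ℂ} (h6 : S.ncard = 6)
    (hnorm : ∀ z ∈ S, ‖z‖ = 2)
    (hsep : ∀ z ∈ S, ∀ w ∈ S, z ≠ w → 2 ≤ ‖z - w‖)
    {q : ℂ} (hq : q ∈ S) :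
    Complex.exp (Real.pi/3 * Complex.I) * q ∈ S := by
  have hπ := Real.pi_pos
  have hq2 : ‖q‖ = 2 := hnorm q hq
  have hq0 : q ≠ 0 := by
    intro h; rw [h] at hq2; simp at hq2
  set β := Real.pi/3 with hβ
  set t : ℂ → ℝ := fun z => if (z/q).arg < 0 then (z/q).arg + 2*Real.pi else (z/q).arg with ht
  have hexp : ∀ z ∈ S, z = q * Complex.exp (t z * Complex.I) := by
    intro z hz
    have habs : ‖z/q‖ = 1 := by
      rw [norm_div, hnorm z hz, hq2]; norm_num
    have h1 : Complex.exp ((z/q).arg * Complex.I) = z/q := by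
      have := Complex.norm_mul_exp_arg_mul_I (z/q)
      rwa [habs, Complex.ofReal_one, one_mul] at this
    have h2 : Complex.exp ((t z : ℝ) * Complex.I) = z/q := by
      rw [ht]
      by_cases hc : (z/q).arg < 0
      · simp only [hc, if_pos]
        rw [show (((z/q).arg + 2*Real.pi : ℝ) : ℂ) * Complex.I
            = (z/q).arg * Complex.I + 2*Real.pi*Complex.I by push_cast; ring]
        rw [Complex.exp_add, Complex.exp_two_pi_mul_I, mul_one, h1]
      · simp only [hc, if_neg, if_false]
        exact h1
    rw [h2]; field_simp
  have htmem : ∀ z ∈ S, 0 ≤ t z ∧ t z < 2*Real.pi := by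
    intro z hz
    have h1 := Complex.neg_pi_lt_arg (z/q)
    have h2 := Complex.arg_le_pi (z/q)
    rw [ht]; by_cases hc : (z/q).arg < 0 <;> simp only [hc, if_pos, if_neg, if_false] <;>
      constructor <;> linarith
  have hcos : ∀ z ∈ S, ∀ w ∈ S, z ≠ w → Real.cos (t z - t w) ≤ 1/2 := by
    intro z hz w hw hne
    have h2 := hsep z hz w hw hne
    have hzw : z - w = q * (Complex.exp (t z * Complex.I) - Complex.exp (t w * Complex.I)) := by
      conv_lhs => rw [hexp z hz, hexp w hw]
      ring
    have habs : ‖z-w‖^2 = 4 * (2 - 2*Real.cos (t z - t w)) := by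
      rw [hzw, norm_mul, mul_pow, hq2, Complex.sq_norm, normSq_exp_sub]
      ring
    nlinarith
  have hgap : ∀ z ∈ S, ∀ w ∈ S, z ≠ w → β ≤ |t z - t w| := by
    intro z hz w hw hne
    by_contra hlt
    push_neg at hlt
    exact absurd (hcos z hz w hw hne) (not_le.2 (half_lt_cos hlt))
  have htinj : ∀ z ∈ S, ∀ w ∈ S, t z = t w → z = w := by
    intro z hz w hw h
    rw [hexp z hz, hexp w hw, h]
  set g : ℂ → ℤ := fun z => ⌊t z / β⌋ with hg
  have hβpos : 0 < β := by rw [hβ]; linarith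
  have harc : ∀ z ∈ S, (g z : ℝ) * β ≤ t z ∧ t z < ((g z : ℝ)+1) * β := by
    intro z hz
    have h1 := Int.floor_le (t z / β)
    have h2 := Int.lt_floor_add_one (t z / β)
    constructor
    · calc (g z : ℝ) * β ≤ (t z / β) * β := by
            exact mul_le_mul_of_nonneg_right h1 hβpos.le
        _ = t z := by field_simp
    · calc t z = (t z / β) * β := by field_simp
        _ < ((g z : ℝ)+1) * β := by
            exact mul_lt_mul_of_pos_right h2 hβpos
  have hgmem : ∀ z ∈ S, g z ∈ Set.Icc (0:ℤ) 5 := by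
    intro z hz
    obtain ⟨h0, h2π⟩ := htmem z hz
    constructor
    · exact Int.floor_nonneg.2 (div_nonneg h0 hβpos.le)
    · have : g z < 6 := by
        rw [hg]
        apply Int.floor_lt.2
        rw [div_lt_iff₀ hβpos]
        push_cast
        rw [hβ]; linarith
      omega
  have hginj : Set.InjOn g S := by
    intro z hz w hw h
    by_contra hne
    have h1 := harc z hz
    have h2 := harc w hw
    have := hgap z hz w hw hne
    rw [h] at h1
    have : |t z - t w| < β := by
      rw [abs_sub_lt_iff]; constructor <;> nlinarith [h1.1, h1.2, h2.1, h2.2]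
    linarith [hgap z hz w hw hne]
  have himg : g '' S = Set.Icc (0:ℤ) 5 := by
    apply Set.eq_of_subset_of_ncard_le
    · rintro k ⟨z, hz, rfl⟩; exact hgmem z hz
    · rw [Set.ncard_image_of_injOn hginj, h6]
      rw [show Set.Icc (0:ℤ) 5 = ↑(Finset.Icc (0:ℤ) 5) by simp]
      rw [Set.ncard_coe_finset]
      decide
    · rw [show Set.Icc (0:ℤ) 5 = ↑(Finset.Icc (0:ℤ) 5) by simp]
      exact (Finset.Icc (0:ℤ) 5).finite_toSet
  have hwit : ∀ k ∈ Set.Icc (0:ℤ) 5, ∃ z ∈ S, g z = k := by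
    intro k hk
    rw [← himg] at hk
    obtain ⟨z, hz, h⟩ := hk
    exact ⟨z, hz, h⟩
  -- t q = 0
  have htq : t q = 0 := by
    rw [ht]
    simp [div_self hq0, Complex.arg_one]
  have hgq : g q = 0 := by rw [hg]; simp [htq]
  obtain ⟨z1, hz1, hg1⟩ := hwit 1 (by norm_num)
  obtain ⟨z2, hz2, hg2⟩ := hwit 2 (by norm_num)
  obtain ⟨z3, hz3, hg3⟩ := hwit 3 (by norm_num)
  obtain ⟨z4, hz4, hg4⟩ := hwit 4 (by norm_num)
  obtain ⟨z5, hz5, hg5⟩ := hwit 5 (by norm_num)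
  -- chain step
  have hstep : ∀ z ∈ S, ∀ w ∈ S, g w = g z + 1 → t z + β ≤ t w := by
    intro z hz w hw hgw
    have hne : z ≠ w := by
      intro h; rw [h] at hgw; omega
    have h1 := harc z hz
    have h2 := harc w hw
    rw [hgw] at h2
    push_cast at h2
    have hd : 0 < t w - t z := by nlinarith [h1.1, h1.2, h2.1, h2.2]
    have := hgap z hz w hw hne
    rw [abs_sub_comm, abs_of_pos hd] at this
    linarith
  have h12 := hstep z1 hz1 z2 hz2 (by omega)
  have h23 := hstep z2 hz2 z3 hz3 (by omega)
  have h34 := hstep z3 hz3 z4 hz4 (by omega)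
  have h45 := hstep z4 hz4 z5 hz5 (by omega)
  -- wrap: t z5 ≤ 5β
  have hne5 : z5 ≠ q := by
    intro h; rw [h, hgq] at hg5; omega
  have hwrap : t z5 ≤ 5*β := by
    by_contra hlt
    push_neg at hlt
    have hc := hcos z5 hz5 q hq hne5
    rw [htq, sub_zero] at hc
    have : Real.cos (t z5 - 2*Real.pi) = Real.cos (t z5) := Real.cos_sub_two_pi _
    have habs : |t z5 - 2*Real.pi| < β := by
      rw [abs_sub_lt_iff]
      have := (htmem z5 hz5).2
      constructor
      · linarith
      · rw [hβ] at *; linarith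
    have := half_lt_cos habs
    rw [Real.cos_sub_two_pi] at this
    linarith
  -- t z1 = β
  have harc1 := harc z1 hz1
  rw [hg1] at harc1
  push_cast at harc1
  have ht1 : t z1 = β := by linarith [harc1.1]
  have : z1 = Complex.exp (Real.pi/3 * Complex.I) * q := by
    rw [hexp z1 hz1, ht1, hβ]
    push_cast
    ring
  rw [← this]
  exact hz1

private lemma hexω_pow4 : hexω^4 = -hexω := by
  rw [show hexω^4 = hexω*hexω^3 from by ring, hexω_cube]; ring

private lemma hexω_pow5 : hexω^5 = 1 - hexω := by
  calc hexω^5 = hexω^2*hexω^3 := by ring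
    _ = (hexω - 1)*(-1) := by rw [hexω_sq, hexω_cube]
    _ = 1 - hexω := by ring


set_option maxHeartbeats 2000000 in
/-- a packing by unit disks in which every disk is tangent to exactly
six other disks is, up to an isometry of the plane, the hexagonal compact packing. -/
theorem unit_compact_packing_is_hexagonal (P : Set Disk) (hP : IsPacking P)
    (hne : P.Nonempty) (hradii : ∀ d ∈ P, d.radius = 1)
    (h6 : ∀ d ∈ P, {d' | d' ∈ P ∧ d' ≠ d ∧ d.Tangent d'}.ncard = 6) :
    ∃ φ : Plane ≃ᵢ Plane,
      Disk.center '' P = φ '' {p : Plane | ∃ a b : ℤ, p = hexCenter a b} := by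
  classical
  set R := Complex.orthonormalBasisOneI.repr with hR
  set F : Disk → ℂ := fun d => R.symm d.center with hF
  -- separation between centers
  have hsep0 : ∀ d ∈ P, ∀ d' ∈ P, d ≠ d' → 2 ≤ dist d.center d'.center := by
    intro d hd d' hd' hdne
    by_contra hlt
    push_neg at hlt
    have h1 : d.radius = 1 := hradii d hd
    have h2 : d'.radius = 1 := hradii d' hd'
    have hdisj : Disjoint (ball d.center 1) (ball d'.center 1) := by
      have h := hP d hd d' hd' hdne
      rw [Disk.set, Disk.set, h1, h2, interior_closedBall _ (by norm_num),
        interior_closedBall _ (by norm_num)] at h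
      exact h
    set m := midpoint ℝ d.center d'.center with hm
    have hm1 : m ∈ ball d.center 1 := by
      rw [mem_ball, dist_comm]
      have := dist_left_midpoint (𝕜 := ℝ) d.center d'.center
      rw [hm]
      rw [this]
      have : ‖(2:ℝ)‖ = 2 := by norm_num
      rw [this]
      linarith [dist_nonneg (x := d.center) (y := d'.center)]
    have hm2 : m ∈ ball d'.center 1 := by
      rw [mem_ball, dist_comm]
      rw [hm, midpoint_comm]
      have := dist_left_midpoint (𝕜 := ℝ) d'.center d.center
      rw [this]
      have h2n : ‖(2:ℝ)‖ = 2 := by norm_num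
      rw [h2n, dist_comm]
      linarith [dist_nonneg (x := d.center) (y := d'.center)]
    exact Set.disjoint_left.1 hdisj hm1 hm2
  have hFdist : ∀ d d' : Disk, ‖F d - F d'‖ = dist d.center d'.center := by
    intro d d'
    rw [← Complex.dist_eq]
    exact LinearIsometryEquiv.dist_map R.symm _ _
  have hinj : Set.InjOn F P := by
    intro d hd d' hd' h
    by_contra hdne
    have h2 := hsep0 d hd d' hd' hdne
    have h3 := hFdist d d'
    rw [h, sub_self] at h3
    simp at h3
    rw [h3] at h2
    simp at h2
    linarith
  set K := F '' P with hK
  have hKsep : ∀ z ∈ K, ∀ w ∈ K, z ≠ w → 2 ≤ ‖z - w‖ := by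
    rintro _ ⟨d, hd, rfl⟩ _ ⟨d', hd', rfl⟩ hne
    have : d ≠ d' := fun h => hne (by rw [h])
    rw [hFdist]
    exact hsep0 d hd d' hd' this
  have hKnbr : ∀ z ∈ K, {w | w ∈ K ∧ w ≠ z ∧ ‖w - z‖ = 2}.ncard = 6 := by
    rintro _ ⟨d, hd, rfl⟩
    have himg : {w | w ∈ K ∧ w ≠ F d ∧ ‖w - F d‖ = 2}
        = F '' {d' | d' ∈ P ∧ d' ≠ d ∧ d.Tangent d'} := by
      ext w
      constructor
      · rintro ⟨⟨d', hd', rfl⟩, hne, habs⟩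
        refine ⟨d', ⟨hd', fun h => hne (by rw [h]), ?_⟩, rfl⟩
        rw [Disk.Tangent, hradii d hd, hradii d' hd']
        rw [hFdist] at habs
        rw [dist_comm]
        linarith
      · rintro ⟨d', ⟨hd', hne, htan⟩, rfl⟩
        refine ⟨⟨d', hd', rfl⟩, fun h => hne (hinj hd' hd h), ?_⟩
        rw [hFdist, dist_comm]
        rw [Disk.Tangent, hradii d hd, hradii d' hd'] at htan
        linarith
    rw [himg, Set.ncard_image_of_injOn (hinj.mono (fun x hx => hx.1))]
    exact h6 d hd
  -- rotation closure of neighbor sets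
  have hrot : ∀ z ∈ K, ∀ w ∈ K, ‖w - z‖ = 2 →
      ∀ k : ℕ, z + hexω^k * (w - z) ∈ K := by
    intro z hz w hw habs k
    induction k with
    | zero => simpa using hw
    | succ n ih =>
      set N := {v | v ∈ K ∧ v ≠ z ∧ ‖v - z‖ = 2} with hN
      set S := (fun v => v - z) '' N with hS
      have hScard : S.ncard = 6 := by
        rw [hS, Set.ncard_image_of_injOn (fun x _ y _ h => by
          have : x - z + z = y - z + z := by rw [h]
          simpa using this)]
        exact hKnbr z hz
      have hSnorm : ∀ v ∈ S, ‖v‖ = 2 := by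
        rintro _ ⟨w', hw', rfl⟩; exact hw'.2.2
      have hSsep : ∀ v ∈ S, ∀ v' ∈ S, v ≠ v' → 2 ≤ ‖v - v'‖ := by
        rintro _ ⟨w1, hw1, rfl⟩ _ ⟨w2, hw2, rfl⟩ hvne
        have hne12 : w1 ≠ w2 := fun h => hvne (by rw [h])
        have := hKsep w1 hw1.1 w2 hw2.1 hne12
        rw [show w1 - z - (w2 - z) = w1 - w2 from by ring]
        exact this
      have habsn : ‖hexω^n * (w - z)‖ = 2 := by
        rw [norm_mul, norm_pow, hexω_abs, one_pow, one_mul, habs]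
      have hqS : hexω^n * (w - z) ∈ S := by
        refine ⟨z + hexω^n * (w - z), ⟨ih, ?_,
          by rwa [show z + hexω^n*(w-z) - z = hexω^n*(w-z) from by ring]⟩,
          by show z + hexω^n*(w-z) - z = _; ring⟩
        intro h
        have h0 : hexω^n * (w - z) = 0 := by linear_combination h
        rw [h0] at habsn
        simp at habsn
      have hres := hex_rotate hScard hSnorm hSsep hqS
      obtain ⟨v, hvN, hveq⟩ := hres
      have hv : v = z + hexω^(n+1) * (w - z) := by
        have : v - z = hexω * (hexω^n * (w - z)) := hveq
        rw [show hexω^(n+1) * (w - z) = hexω * (hexω^n * (w - z)) from by ring, ← this]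
        ring
      rw [← hv]
      exact hvN.1
  -- base point and base direction
  obtain ⟨d0, hd0⟩ := hne
  set c := F d0 with hc
  have hcK : c ∈ K := ⟨d0, hd0, rfl⟩
  obtain ⟨q, hqK, hqne, hqabs⟩ :
      {w | w ∈ K ∧ w ≠ c ∧ ‖w - c‖ = 2}.Nonempty :=
    Set.nonempty_of_ncard_ne_zero (by rw [hKnbr c hcK]; norm_num)
  set u := q - c with hu
  have huabs : ‖u‖ = 2 := hqabs
  have hu0 : u ≠ 0 := by intro h; rw [h] at huabs; simp at huabs
  -- the two basic membership generators
  have hA : ∀ x ∈ K, x + u ∈ K → ∀ k : ℕ, x + hexω^k * u ∈ K := by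
    intro x hx hxu k
    have := hrot x hx (x+u) hxu (by rwa [show x + u - x = u from by ring]) k
    rwa [show x + hexω^k * (x + u - x) = x + hexω^k * u from by ring] at this
  have hB : ∀ x ∈ K, x + u ∈ K → ∀ k : ℕ, x + u - hexω^k * u ∈ K := by
    intro x hx hxu k
    have := hrot (x+u) hxu x hx
      (by rw [show x - (x + u) = -u from by ring, norm_neg]; exact huabs) k
    rwa [show x + u + hexω^k * (x - (x+u)) = x + u - hexω^k * u from by ring] at this
  -- the lattice predicate
  set Q : ℤ → ℤ → Prop := fun a b =>
    (c + ((a:ℂ) + (b:ℂ)*hexω)*u ∈ K) ∧ (c + ((a:ℂ) + 1 + (b:ℂ)*hexω)*u ∈ K) with hQ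
  have hQ00 : Q 0 0 := by
    constructor
    · rw [show c + (((0:ℤ):ℂ) + ((0:ℤ):ℂ)*hexω)*u = c from by push_cast; ring]
      exact hcK
    · rw [show c + (((0:ℤ):ℂ) + 1 + ((0:ℤ):ℂ)*hexω)*u = c + u from by push_cast; ring,
        show c + u = q from by rw [hu]; ring]
      exact hqK
  have hxu_mem : ∀ a b : ℤ, Q a b → c + ((a:ℂ) + (b:ℂ)*hexω)*u + u ∈ K := by
    intro a b h
    rw [show c + ((a:ℂ) + (b:ℂ)*hexω)*u + u = c + ((a:ℂ) + 1 + (b:ℂ)*hexω)*u from by ring]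
    exact h.2
  have hright : ∀ a b : ℤ, Q a b → Q (a+1) b := by
    intro a b h
    constructor
    · rw [show c + (((a+1:ℤ):ℂ) + (b:ℂ)*hexω)*u = c + ((a:ℂ) + 1 + (b:ℂ)*hexω)*u from by
        push_cast; ring]
      exact h.2
    · have := hB _ h.1 (hxu_mem a b h) 3
      rw [hexω_cube] at this
      rw [show c + (((a+1:ℤ):ℂ) + 1 + (b:ℂ)*hexω)*u
          = c + ((a:ℂ) + (b:ℂ)*hexω)*u + u - (-1)*u from by push_cast; ring]
      exact this
  have hleft : ∀ a b : ℤ, Q a b → Q (a-1) b := by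
    intro a b h
    constructor
    · have := hA _ h.1 (hxu_mem a b h) 3
      rw [hexω_cube] at this
      rw [show c + (((a-1:ℤ):ℂ) + (b:ℂ)*hexω)*u
          = c + ((a:ℂ) + (b:ℂ)*hexω)*u + (-1)*u from by push_cast; ring]
      exact this
    · rw [show c + (((a-1:ℤ):ℂ) + 1 + (b:ℂ)*hexω)*u = c + ((a:ℂ) + (b:ℂ)*hexω)*u from by
        push_cast; ring]
      exact h.1
  have hup : ∀ a b : ℤ, Q a b → Q a (b+1) := by
    intro a b h
    constructor
    · have := hA _ h.1 (hxu_mem a b h) 1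
      rw [show c + ((a:ℂ) + ((b+1:ℤ):ℂ)*hexω)*u
          = c + ((a:ℂ) + (b:ℂ)*hexω)*u + hexω^1*u from by push_cast; ring]
      exact this
    · have := hB _ h.1 (hxu_mem a b h) 4
      rw [hexω_pow4] at this
      rw [show c + ((a:ℂ) + 1 + ((b+1:ℤ):ℂ)*hexω)*u
          = c + ((a:ℂ) + (b:ℂ)*hexω)*u + u - (-hexω)*u from by push_cast; ring]
      exact this
  have hdown : ∀ a b : ℤ, Q a b → Q a (b-1) := by
    intro a b h
    constructor
    · have := hA _ h.1 (hxu_mem a b h) 4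
      rw [hexω_pow4] at this
      rw [show c + ((a:ℂ) + ((b-1:ℤ):ℂ)*hexω)*u
          = c + ((a:ℂ) + (b:ℂ)*hexω)*u + (-hexω)*u from by push_cast; ring]
      exact this
    · have := hA _ h.1 (hxu_mem a b h) 5
      rw [hexω_pow5] at this
      rw [show c + ((a:ℂ) + 1 + ((b-1:ℤ):ℂ)*hexω)*u
          = c + ((a:ℂ) + (b:ℂ)*hexω)*u + (1-hexω)*u from by push_cast; ring]
      exact this
  have hQa0 : ∀ a : ℤ, Q a 0 := by
    intro a
    induction a using Int.induction_on with
    | zero => exact hQ00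
    | succ a ih => exact hright a 0 ih
    | pred a ih => exact hleft (-a) 0 ih
  have hQall : ∀ a b : ℤ, Q a b := by
    intro a b
    induction b using Int.induction_on with
    | zero => exact hQa0 a
    | succ b ih => exact hup a b ih
    | pred b ih => exact hdown a (-b) ih
  have hlat : ∀ a b : ℤ, c + ((a:ℂ) + (b:ℂ)*hexω)*u ∈ K := fun a b => (hQall a b).1
  -- covering: every element of K is a lattice point
  have hcov : ∀ z ∈ K, ∃ a b : ℤ, z = c + ((a:ℂ) + (b:ℂ)*hexω)*u := by
    intro z hz
    set w := (z - c)/u with hw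
    have hwz : z = c + w*u := by
      rw [hw, div_mul_cancel₀ _ hu0]; ring
    set t : ℝ := w.im / (Real.sqrt 3 / 2) with htdef
    set b := round t with hb
    set s : ℝ := w.re - t/2 with hs
    set a := round s with ha
    have hs3 : Real.sqrt 3 / 2 ≠ 0 := by positivity
    have hwim : w.im = t * (Real.sqrt 3/2) := by rw [htdef]; field_simp
    have hwre : w.re = s + t/2 := by rw [hs]; ring
    have hσ : |s - (a:ℝ)| ≤ 1/2 := abs_sub_round s
    have hτ : |t - (b:ℝ)| ≤ 1/2 := abs_sub_round t
    refine ⟨a, b, ?_⟩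
    by_contra hzne
    have hmem := hlat a b
    have h2 := hKsep z hz _ hmem hzne
    have hab : ((a:ℂ) + (b:ℂ)*hexω)
        = (((a:ℝ) + (b:ℝ)/2 : ℝ):ℂ) + (((b:ℝ)*(Real.sqrt 3/2) : ℝ):ℂ)*Complex.I := by
      rw [hexω_val]; push_cast; ring
    have hdiff : z - (c + ((a:ℂ) + (b:ℂ)*hexω)*u) = (w - ((a:ℂ) + (b:ℂ)*hexω))*u := by
      rw [hwz]; ring
    have hwrep : w = ((w.re : ℝ):ℂ) + ((w.im : ℝ):ℂ)*Complex.I := (Complex.re_add_im w).symm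
    have hnsq : Complex.normSq (w - ((a:ℂ) + (b:ℂ)*hexω)) ≤ 3/4 := by
      rw [hab]
      conv_lhs => rw [hwrep]
      rw [show ((w.re : ℝ):ℂ) + ((w.im : ℝ):ℂ)*Complex.I
          - ((((a:ℝ) + (b:ℝ)/2 : ℝ):ℂ) + (((b:ℝ)*(Real.sqrt 3/2) : ℝ):ℂ)*Complex.I)
          = (((w.re - ((a:ℝ) + (b:ℝ)/2) : ℝ)):ℂ)
            + (((w.im - (b:ℝ)*(Real.sqrt 3/2) : ℝ)):ℂ)*Complex.I from by push_cast; ring]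
      rw [Complex.normSq_add_mul_I]
      rw [hwre, hwim]
      have e1 : s + t/2 - ((a:ℝ) + (b:ℝ)/2) = (s - a) + (t - b)/2 := by ring
      have e2 : t*(Real.sqrt 3/2) - (b:ℝ)*(Real.sqrt 3/2) = (t - b)*(Real.sqrt 3/2) := by ring
      rw [e1, e2]
      have h3 : (Real.sqrt 3)^2 = 3 := Real.sq_sqrt (by norm_num)
      have hσ2 : (s - (a:ℝ))^2 ≤ 1/4 := by
        rw [← sq_abs]
        nlinarith [abs_nonneg (s - (a:ℝ))]
      have hτ2 : (t - (b:ℝ))^2 ≤ 1/4 := by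
        rw [← sq_abs]
        nlinarith [abs_nonneg (t - (b:ℝ))]
      have hprod : |s - (a:ℝ)| * |t - (b:ℝ)| ≤ 1/4 := by
        nlinarith [abs_nonneg (s - (a:ℝ)), abs_nonneg (t - (b:ℝ))]
      have hστ : (s - (a:ℝ))*(t - (b:ℝ)) ≤ 1/4 := by
        calc (s - (a:ℝ))*(t - (b:ℝ)) ≤ |(s - (a:ℝ))*(t - (b:ℝ))| := le_abs_self _
          _ = |s - (a:ℝ)| * |t - (b:ℝ)| := abs_mul _ _
          _ ≤ 1/4 := hprod
      nlinarith
    have habslt : ‖z - (c + ((a:ℂ) + (b:ℂ)*hexω)*u)‖ < 2 := by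
      rw [hdiff, norm_mul, huabs]
      have hnn : 0 ≤ ‖w - ((a:ℂ) + (b:ℂ)*hexω)‖ := norm_nonneg _
      have hsq := Complex.sq_norm (w - ((a:ℂ) + (b:ℂ)*hexω))
      have h1 : ‖w - ((a:ℂ) + (b:ℂ)*hexω)‖ < 1 := by nlinarith
      nlinarith
    linarith
  -- the isometry of ℂ
  have hu2abs : ‖u/2‖ = 1 := by
    rw [norm_div, huabs]
    simp
  have hu20 : (u/2 : ℂ) ≠ 0 := by
    intro h
    rw [h] at hu2abs
    simp at hu2abs
  set ψ : ℂ ≃ᵢ ℂ := IsometryEquiv.mk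
    ⟨fun z => c + (u/2)*z, fun z => (z - c)/(u/2),
      fun z => by
        show (c + u/2*z - c)/(u/2) = z
        rw [show c + u/2*z - c = z*(u/2) from by ring, mul_div_assoc, div_self hu20, mul_one],
      fun z => by
        show c + u/2*((z-c)/(u/2)) = z
        rw [show u/2*((z-c)/(u/2)) = (z-c)*((u/2)/(u/2)) from by ring, div_self hu20, mul_one]
        ring⟩
    (Isometry.of_dist_eq (fun z1 z2 => by
      simp only [Equiv.coe_fn_mk]
      rw [Complex.dist_eq, Complex.dist_eq,
        show c + (u/2)*z1 - (c + (u/2)*z2) = (u/2)*(z1-z2) from by ring,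
        norm_mul, hu2abs, one_mul])) with hψ
  have hψapp : ∀ z : ℂ, ψ z = c + (u/2)*z := fun z => rfl
  set φ : Plane ≃ᵢ Plane :=
    (R.symm.toIsometryEquiv.trans ψ).trans R.toIsometryEquiv with hφ
  have hφapp : ∀ z : ℂ, φ (R z) = R (ψ z) := by
    intro z
    rw [hφ]
    simp only [IsometryEquiv.trans_apply, LinearIsometryEquiv.coe_toIsometryEquiv,
      LinearIsometryEquiv.symm_apply_apply]
  -- hexagonal centers in complex coordinates
  have hζR : ∀ x y : ℝ, R ((x:ℂ) + (y:ℂ)*Complex.I) = ![x, y] := by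
    intro x y
    rw [hR, Complex.orthonormalBasisOneI_repr_apply]
    congr 1 <;> simp
  have hhexC : ∀ a b : ℤ, hexCenter a b
      = R ((((2*a+b : ℤ):ℝ):ℂ) + (((Real.sqrt 3 * b):ℝ):ℂ)*Complex.I) := by
    intro a b
    ext i
    rw [hζR]
    fin_cases i <;>
      simp [hexCenter, WithLp.equiv_symm_apply] <;> push_cast <;> ring
  have hψζ : ∀ a b : ℤ, ψ ((((2*a+b : ℤ):ℝ):ℂ) + (((Real.sqrt 3 * b):ℝ):ℂ)*Complex.I)
      = c + ((a:ℂ) + (b:ℂ)*hexω)*u := by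
    intro a b
    rw [hψapp, hexω_val]
    push_cast
    ring
  refine ⟨φ, ?_⟩
  ext p
  constructor
  · rintro ⟨d, hd, rfl⟩
    obtain ⟨a, b, hab⟩ := hcov (F d) ⟨d, hd, rfl⟩
    refine ⟨hexCenter a b, ⟨a, b, rfl⟩, ?_⟩
    rw [hhexC a b, hφapp, hψζ, ← hab]
    show R (R.symm d.center) = d.center
    simp
  · rintro ⟨x, ⟨a, b, rfl⟩, rfl⟩
    rw [hhexC a b, hφapp, hψζ]
    obtain ⟨d, hd, hFd⟩ := hlat a b
    refine ⟨d, hd, ?_⟩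
    rw [← hFd]
    show d.center = R (R.symm d.center)
    simp
end

section
/- Encode each Wang tile set as a finite list of quadruples of natural numbers (the four edge colors of each tile). The set of encodings of Wang tile sets that do NOT admit a tiling of the plane is computably enumerable (recursively enumerable): there is an algorithm that, given a tile set, halts exactly when the tile set does not tile the plane (by searching for an n such that no tiling of the n × n square exists). -/
/-!
The space `ℤ × ℤ → T` is compact (Tychonoff, `T` finite) and each matching condition cuts out a
closed subset of it; finitely many conditions are met by a shifted tiling of a large square, so a
tile set tiles the plane as soon as it tiles every finite square. Whether the `n × n` square can be
tiled is decidable, by running through its `|T| ^ (n * n)` assignments coded as base-`|T|`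
numerals. Hence an unbounded search for an untileable square halts exactly on the tile sets that do
not tile the plane.
-/

/-- `f` is a valid Wang tiling of the plane by the tile set encoded by the list `ts`,
each tile being a quadruple `(north, east, south, west)` of natural-number colors:
the east color of each tile equals the west color of its right neighbor, and the
north color of each tile equals the south color of its upper neighbor. -/
def IsWangTilingOf (ts : List (ℕ × ℕ × ℕ × ℕ)) (f : ℤ × ℤ → Fin ts.length) : Prop :=
  ∀ x y : ℤ,
    (ts.get (f (x, y))).2.1 = (ts.get (f (x + 1, y))).2.2.2 ∧
    (ts.get (f (x, y))).1 = (ts.get (f (x, y + 1))).2.2.1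

/-- The encoded Wang tile set `ts` admits a tiling of the plane. -/
def WangTilesPlane (ts : List (ℕ × ℕ × ℕ × ℕ)) : Prop :=
  ∃ f : ℤ × ℤ → Fin ts.length, IsWangTilingOf ts f

abbrev WangTile := ℕ × ℕ × ℕ × ℕ

def IsSquareTilingOf (ts : List WangTile) (n : ℕ) (g : Fin n × Fin n → Fin ts.length) : Prop :=
  ∀ i i' j : Fin n, (i' : ℕ) = i + 1 →
    (ts.get (g (i, j))).2.1 = (ts.get (g (i', j))).2.2.2 ∧
    (ts.get (g (j, i))).1 = (ts.get (g (j, i'))).2.2.1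

def SquareTileable (ts : List WangTile) (n : ℕ) : Prop :=
  ∃ g, IsSquareTilingOf ts n g

section Compactness

variable {ts : List WangTile}

def MatchesAt (ts : List WangTile) (f : ℤ × ℤ → Fin ts.length) (p : ℤ × ℤ) : Prop :=
  (ts.get (f p)).2.1 = (ts.get (f (p.1 + 1, p.2))).2.2.2 ∧
    (ts.get (f p)).1 = (ts.get (f (p.1, p.2 + 1))).2.2.1

theorem isClosed_setOf_matchesAt (p : ℤ × ℤ) : IsClosed {f | MatchesAt ts f p} := by
  have hcont (q : ℤ × ℤ) (color : WangTile → ℕ) :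
      Continuous fun f : ℤ × ℤ → Fin ts.length => color (ts.get (f q)) :=
    (continuous_of_discreteTopology (f := fun i : Fin ts.length => color (ts.get i))).comp
      (continuous_apply q)
  exact (isClosed_eq (hcont p (·.2.1)) (hcont (p.1 + 1, p.2) (·.2.2.2))).inter
    (isClosed_eq (hcont p (·.1)) (hcont (p.1, p.2 + 1) (·.2.2.1)))

theorem SquareTileable.exists_matchesAt_of_natAbs_le {n : ℕ} (h : SquareTileable ts (2 * n + 2)) :
    ∃ f, ∀ p : ℤ × ℤ, p.1.natAbs ≤ n → p.2.natAbs ≤ n → MatchesAt ts f p := by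
  obtain ⟨g, hg⟩ := h
  let clamp (z : ℤ) : Fin (2 * n + 2) := ⟨min (z + n).toNat (2 * n + 1), by omega⟩
  have hclamp {z : ℤ} (hz : z.natAbs ≤ n) : (clamp (z + 1) : ℕ) = clamp z + 1 := by
    simp only [clamp]; omega
  exact ⟨fun p => g (clamp p.1, clamp p.2),
    fun p hx hy => ⟨(hg _ _ _ (hclamp hx)).1, (hg _ _ _ (hclamp hy)).2⟩⟩

theorem wangTilesPlane_iff_forall_squareTileable :
    WangTilesPlane ts ↔ ∀ n, SquareTileable ts n := by
  constructor
  · rintro ⟨f, hf⟩ n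
    refine ⟨fun q => f (q.1, q.2), fun i i' j hi' => ?_⟩
    have hcast : ((i' : ℕ) : ℤ) = (i : ℕ) + 1 := by omega
    simpa only [hcast] using ⟨(hf i j).1, (hf j i).2⟩
  · intro h
    have hfinite (u : Finset (ℤ × ℤ)) :
        (Set.univ ∩ ⋂ p ∈ u, {f | MatchesAt ts f p}).Nonempty := by
      let bound (p : ℤ × ℤ) := max p.1.natAbs p.2.natAbs
      obtain ⟨f, hf⟩ := (h (2 * u.sup bound + 2)).exists_matchesAt_of_natAbs_le
      refine ⟨f, Set.mem_univ f, Set.mem_iInter₂.2 fun p hp => hf p ?_ ?_⟩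
      · exact (le_max_left _ _).trans (Finset.le_sup (f := bound) hp)
      · exact (le_max_right _ _).trans (Finset.le_sup (f := bound) hp)
    obtain ⟨f, -, hf⟩ := isCompact_univ.inter_iInter_nonempty _ isClosed_setOf_matchesAt hfinite
    exact ⟨f, fun x y => Set.mem_iInter.1 hf (x, y)⟩

end Compactness

section Coding

variable {ts : List WangTile} {n : ℕ}

def IsMatchingSquare (n : ℕ) (c : ℕ → ℕ → WangTile) : Prop :=
  ∀ i < n - 1, ∀ j < n, (c i j).2.1 = (c (i + 1) j).2.2.2 ∧ (c j i).1 = (c j (i + 1)).2.2.1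

theorem isSquareTilingOf_iff_isMatchingSquare {g : Fin n × Fin n → Fin ts.length}
    {c : ℕ → ℕ → WangTile} (hc : ∀ i j : Fin n, ts.get (g (i, j)) = c i j) :
    IsSquareTilingOf ts n g ↔ IsMatchingSquare n c := by
  constructor
  · intro h i hi j hj
    simpa only [hc] using h ⟨i, by omega⟩ ⟨i + 1, by omega⟩ ⟨j, hj⟩ rfl
  · intro h i i' j hi'
    simpa only [hc, hi'] using h i (by omega) j j.isLt

/-- Cell `(i, j)` of the `n × n` square coded by `k`: its tile index is the base-`ts.length` digit
of `k` at position `j + n * i`, as in `finFunctionFinEquiv` composed with `finProdFinEquiv`. -/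
def squareCell (ts : List WangTile) (n k i j : ℕ) : WangTile :=
  ts.getD (k / ts.length ^ (j + n * i) % ts.length) default

theorem get_finFunctionFinEquiv_symm (k : Fin (ts.length ^ (n * n))) (i j : Fin n) :
    ts.get (finFunctionFinEquiv.symm k (finProdFinEquiv (i, j))) = squareCell ts n k i j := by
  set d := finFunctionFinEquiv.symm k (finProdFinEquiv (i, j))
  have hd : (d : ℕ) = k / ts.length ^ (j + n * i : ℕ) % ts.length := by simp [d]
  rw [squareCell, ← hd, List.getD_eq_getElem _ _ d.isLt, List.get_eq_getElem]

theorem squareTileable_iff_exists_lt :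
    SquareTileable ts n ↔ ∃ k < ts.length ^ (n * n), IsMatchingSquare n (squareCell ts n k) := by
  let e : (Fin n × Fin n → Fin ts.length) ≃ Fin (ts.length ^ (n * n)) :=
    (finProdFinEquiv.arrowCongr (Equiv.refl _)).trans finFunctionFinEquiv
  have hcode (k : ℕ) (hk : k < ts.length ^ (n * n)) :
      IsSquareTilingOf ts n (e.symm ⟨k, hk⟩) ↔ IsMatchingSquare n (squareCell ts n k) :=
    isSquareTilingOf_iff_isMatchingSquare (get_finFunctionFinEquiv_symm ⟨k, hk⟩)
  rw [SquareTileable, e.exists_congr_left, Fin.exists_iff]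
  exact exists_congr fun k =>
    ⟨fun ⟨hk, h⟩ => ⟨hk, (hcode k hk).1 h⟩, fun ⟨hk, h⟩ => ⟨hk, (hcode k hk).2 h⟩⟩

end Coding

section Computability

open Primrec

theorem ComputablePred.rePred_exists_nat {α : Type*} [Primcodable α] {p : α → ℕ → Prop}
    (hp : ComputablePred fun q : α × ℕ => p q.1 q.2) : REPred fun a => ∃ n, p a n := by
  obtain ⟨_, hp⟩ := hp
  refine (Partrec.rfind hp.to₂.partrec₂).dom_re.of_eq fun a => ?_
  simp

theorem Primrec.nat_pow : Primrec₂ ((· ^ ·) : ℕ → ℕ → ℕ) :=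
  Primrec₂.unpaired'.1 Nat.Primrec.pow

variable {α : Type*} [Primcodable α]

theorem Primrec.squareCell {ts : α → List WangTile} {n k i j : α → ℕ} (hts : Primrec ts)
    (hn : Primrec n) (hk : Primrec k) (hi : Primrec i) (hj : Primrec j) :
    Primrec fun a => _root_.squareCell (ts a) (n a) (k a) (i a) (j a) :=
  have hL := list_length.comp hts
  (list_getD default).comp hts <| nat_mod.comp
    (nat_div.comp hk (nat_pow.comp hL (nat_add.comp hj (nat_mul.comp hn hi)))) hL

theorem PrimrecPred.isMatchingSquare {n : α → ℕ} {c : α → ℕ → ℕ → WangTile} (hn : Primrec n)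
    (hc : Primrec fun q : α × ℕ × ℕ => c q.1 q.2.1 q.2.2) :
    PrimrecPred fun a => IsMatchingSquare (n a) (c a) := by
  have hc' {f : α × ℕ × ℕ → α} {g h : α × ℕ × ℕ → ℕ} (hf : Primrec f) (hg : Primrec g)
      (hh : Primrec h) : Primrec fun q => c (f q) (g q) (h q) :=
    hc.comp (hf.pair (hg.pair hh))
  have hi : Primrec fun q : α × ℕ × ℕ => q.2.1 := fst.comp snd
  have hj : Primrec fun q : α × ℕ × ℕ => q.2.2 := snd.comp snd
  have hi1 : Primrec fun q : α × ℕ × ℕ => q.2.1 + 1 := succ.comp hi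
  have hmatch : PrimrecPred fun q : α × ℕ × ℕ =>
      (c q.1 q.2.1 q.2.2).2.1 = (c q.1 (q.2.1 + 1) q.2.2).2.2.2 ∧
      (c q.1 q.2.2 q.2.1).1 = (c q.1 q.2.2 (q.2.1 + 1)).2.2.1 :=
    .and (Primrec.eq.comp (fst.comp (snd.comp (hc' fst hi hj)))
        (snd.comp (snd.comp (snd.comp (hc' fst hi1 hj)))))
      (Primrec.eq.comp (fst.comp (hc' fst hj hi))
        (fst.comp (snd.comp (snd.comp (hc' fst hj hi1)))))
  have hrow :=
    (hmatch.comp ((fst.comp snd).pair ((snd.comp snd).pair fst))).primrecRel.forall_mem_list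
  have hsquare :=
    (hrow.comp (list_range.comp (hn.comp snd)) (snd.pair fst)).primrecRel.forall_mem_list
  exact (hsquare.comp (list_range.comp (nat_sub.comp hn (const 1))) Primrec.id).of_eq fun a => by
    simp only [List.mem_range, IsMatchingSquare, id]

theorem computablePred_squareTileable :
    ComputablePred fun p : List WangTile × ℕ => SquareTileable p.1 p.2 := by
  have hcells : PrimrecRel fun k (p : List WangTile × ℕ) =>
      IsMatchingSquare p.2 (squareCell p.1 p.2 k) :=
    PrimrecPred.isMatchingSquare (snd.comp snd) <| Primrec.squareCell (fst.comp (snd.comp fst))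
      (snd.comp (snd.comp fst)) (fst.comp fst) (fst.comp snd) (snd.comp snd)
  have hbound : Primrec fun p : List WangTile × ℕ => p.1.length ^ (p.2 * p.2) :=
    nat_pow.comp (list_length.comp fst) (nat_mul.comp snd snd)
  refine (hcells.exists_mem_list.comp (list_range.comp hbound) Primrec.id).computablePred.of_eq
    fun p => ?_
  simp only [List.mem_range, id, squareTileable_iff_exists_lt]

end Computability

/-- the set of (encodings of) Wang tile sets that do *not* tile the
plane is computably enumerable. -/
theorem not_tiling_re : REPred (fun ts : List (ℕ × ℕ × ℕ × ℕ) => ¬ WangTilesPlane ts) := by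
  have hsearch : REPred fun ts => ∃ n, ¬ SquareTileable ts n :=
    ComputablePred.rePred_exists_nat computablePred_squareTileable.not
  refine hsearch.of_eq fun ts => ?_
  rw [wangTilesPlane_iff_forall_squareTileable, not_forall]
end

section
/- Encode each Wang tile set as a finite list of quadruples of natural numbers (the four edge colors of each tile). If every Wang tile set that admits a tiling of the plane also admits a periodic tiling of the plane, then the predicate 'this tile set admits a tiling of the plane' is a computable (decidable by an algorithm) predicate on encodings of Wang tile sets; that is, under this hypothesis the Domino problem is decidable. -/
set_option maxHeartbeats 1000000


/-- A tiling is periodic if it is invariant under two linearly independent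
translations of `ℤ²`. -/
def IsPeriodicTiling (ts : List (ℕ × ℕ × ℕ × ℕ)) (f : ℤ × ℤ → Fin ts.length) : Prop :=
  IsWangTilingOf ts f ∧
    ∃ u v : ℤ × ℤ, u.1 * v.2 - u.2 * v.1 ≠ 0 ∧
      (∀ p : ℤ × ℤ, f (p + u) = f p) ∧ (∀ p : ℤ × ℤ, f (p + v) = f p)

namespace DominoAux

abbrev Tile := ℕ × ℕ × ℕ × ℕ

def cell (ts : List Tile) (m : ℕ) (g : List ℕ) (i j : ℕ) : Tile :=
  ts.getD (g.getD (i * m + j) 0) (0, 0, 0, 0)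

def okSq (ts : List Tile) (m : ℕ) (g : List ℕ) : Bool :=
  (List.range m).all fun i => (List.range m).all fun j =>
    (decide (g.getD (i * m + j) 0 < ts.length) &&
    (!decide (i + 1 < m) || decide ((cell ts m g i j).2.1 = (cell ts m g (i + 1) j).2.2.2))) &&
    (!decide (j + 1 < m) || decide ((cell ts m g i j).1 = (cell ts m g i (j + 1)).2.2.1))

def okTor (ts : List Tile) (m : ℕ) (g : List ℕ) : Bool :=
  (List.range m).all fun i => (List.range m).all fun j =>
    (decide (g.getD (i * m + j) 0 < ts.length) &&
    decide ((cell ts m g i j).2.1 = (cell ts m g ((i + 1) % m) j).2.2.2)) &&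
    decide ((cell ts m g i j).1 = (cell ts m g i ((j + 1) % m)).2.2.1)

def cands (k : ℕ) : ℕ → List (List ℕ)
  | 0 => [[]]
  | m + 1 => (List.range k).flatMap fun c => (cands k m).map (c :: ·)

def sqB (ts : List Tile) (n : ℕ) : Bool :=
  (cands ts.length ((n + 2) * (n + 2))).any (okSq ts (n + 2))

def torB (ts : List Tile) (n : ℕ) : Bool :=
  (cands ts.length ((n + 1) * (n + 1))).any (okTor ts (n + 1))

lemma mem_cands {k : ℕ} : ∀ {len : ℕ} {g : List ℕ},
    g ∈ cands k len ↔ g.length = len ∧ ∀ x ∈ g, x < k := by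
  intro len
  induction len with
  | zero =>
    intro g
    simp only [cands, List.mem_singleton, List.length_eq_zero_iff]
    constructor
    · rintro rfl; simp
    · rintro ⟨rfl, -⟩; rfl
  | succ m ih =>
    intro g
    simp only [cands, List.mem_flatMap, List.mem_map, List.mem_range]
    constructor
    · rintro ⟨c, hc, g', hg', rfl⟩
      obtain ⟨hl, hb⟩ := ih.1 hg'
      refine ⟨by simp [hl], ?_⟩
      intro x hx
      rcases List.mem_cons.1 hx with rfl | hx
      · exact hc
      · exact hb x hx
    · rintro ⟨hl, hb⟩
      cases g with
      | nil => simp at hl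
      | cons c g' =>
        refine ⟨c, hb c (by simp), g', ih.2 ⟨by simpa using hl, fun x hx => hb x (by simp [hx])⟩, rfl⟩

lemma okSq_iff {ts : List Tile} {m : ℕ} {g : List ℕ} :
    okSq ts m g = true ↔ ∀ i < m, ∀ j < m,
      g.getD (i * m + j) 0 < ts.length ∧
      (i + 1 < m → (cell ts m g i j).2.1 = (cell ts m g (i + 1) j).2.2.2) ∧
      (j + 1 < m → (cell ts m g i j).1 = (cell ts m g i (j + 1)).2.2.1) := by
  simp only [okSq, List.all_eq_true, List.mem_range, Bool.and_eq_true, Bool.or_eq_true,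
    Bool.not_eq_true', decide_eq_true_eq, decide_eq_false_iff_not]
  constructor
  · intro H i hi j hj
    obtain ⟨⟨h1, h2⟩, h3⟩ := H i hi j hj
    exact ⟨h1, fun h => h2.resolve_left (by simpa using h), fun h => h3.resolve_left (by simpa using h)⟩
  · intro H i hi j hj
    obtain ⟨h1, h2, h3⟩ := H i hi j hj
    refine ⟨⟨h1, ?_⟩, ?_⟩
    · by_cases h : i + 1 < m
      · exact Or.inr (h2 h)
      · exact Or.inl h
    · by_cases h : j + 1 < m
      · exact Or.inr (h3 h)
      · exact Or.inl h

lemma okTor_iff {ts : List Tile} {m : ℕ} {g : List ℕ} :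
    okTor ts m g = true ↔ ∀ i < m, ∀ j < m,
      g.getD (i * m + j) 0 < ts.length ∧
      (cell ts m g i j).2.1 = (cell ts m g ((i + 1) % m) j).2.2.2 ∧
      (cell ts m g i j).1 = (cell ts m g i ((j + 1) % m)).2.2.1 := by
  simp only [okTor, List.all_eq_true, List.mem_range, Bool.and_eq_true, decide_eq_true_eq]
  constructor
  · intro H i hi j hj
    obtain ⟨⟨h1, h2⟩, h3⟩ := H i hi j hj
    exact ⟨h1, h2, h3⟩
  · intro H i hi j hj
    obtain ⟨h1, h2, h3⟩ := H i hi j hj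
    exact ⟨⟨h1, h2⟩, h3⟩

lemma get_eq_getD (l : List Tile) (p : Fin l.length) : l.get p = l.getD p.val (0, 0, 0, 0) := by
  simp [List.getD_eq_getElem?_getD, List.getElem?_eq_getElem p.isLt]

/-- the grid encoding of a function on `[0,m)²`. -/
def gridOf (F : ℕ → ℕ → ℕ) (m : ℕ) : List ℕ :=
  (List.range (m * m)).map fun idx => F (idx / m) (idx % m)

lemma gridOf_getD {F : ℕ → ℕ → ℕ} {m i j : ℕ} (hi : i < m) (hj : j < m) :
    (gridOf F m).getD (i * m + j) 0 = F i j := by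
  have hlt : i * m + j < m * m := by
    calc i * m + j < i * m + m := by omega
    _ = (i + 1) * m := by ring
    _ ≤ m * m := Nat.mul_le_mul_right m hi
  have hd : (i * m + j) / m = i := by
    rw [mul_comm i m, Nat.mul_add_div (by omega), Nat.div_eq_of_lt hj, add_zero]
  have hm : (i * m + j) % m = j := by
    rw [mul_comm i m, Nat.mul_add_mod, Nat.mod_eq_of_lt hj]
  simp [gridOf, List.getD_eq_getElem?_getD, List.getElem?_map, List.getElem?_range hlt, hd, hm]

lemma gridOf_mem_cands {F : ℕ → ℕ → ℕ} {m k : ℕ} (h : ∀ idx, F (idx / m) (idx % m) < k) :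
    gridOf F m ∈ cands k (m * m) := by
  refine mem_cands.2 ⟨by simp [gridOf], ?_⟩
  intro x hx
  simp only [gridOf, List.mem_map, List.mem_range] at hx
  obtain ⟨idx, _, rfl⟩ := hx
  exact h idx


/-! ### integer mod helpers -/

def em (m : ℕ) (x : ℤ) : ℕ := (x % (m : ℤ)).toNat

lemma em_lt {m : ℕ} (hm : 0 < m) (x : ℤ) : em m x < m := by
  have h0 : 0 ≤ x % (m : ℤ) := Int.emod_nonneg x (by exact_mod_cast hm.ne')
  have h1 : x % (m : ℤ) < m := Int.emod_lt_of_pos x (by exact_mod_cast hm)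
  unfold em; omega

lemma em_succ {m : ℕ} (hm : 0 < m) (x : ℤ) : em m (x + 1) = (em m x + 1) % m := by
  have h0 : 0 ≤ x % (m : ℤ) := Int.emod_nonneg x (by exact_mod_cast hm.ne')
  have key : (x + 1) % (m : ℤ) = (((em m x + 1) % m : ℕ) : ℤ) := by
    have e1 : x + 1 = x % m + 1 + x / m * m := by
      linear_combination -Int.emod_add_mul_ediv x (m : ℤ)
    rw [e1, Int.add_mul_emod_self_right]
    have e2 : x % (m : ℤ) = ((em m x : ℕ) : ℤ) := (Int.toNat_of_nonneg h0).symm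
    rw [e2]
    push_cast
    ring
  rw [em, key, Int.toNat_natCast]

lemma em_natCast {m : ℕ} {i : ℕ} (hi : i < m) : em m (i : ℤ) = i := by
  rw [em, show ((i : ℤ) % (m : ℤ)) = ((i % m : ℕ) : ℤ) by push_cast; ring,
    Int.toNat_natCast, Nat.mod_eq_of_lt hi]

/-! ### periods -/

def IsPeriod {α : Type*} (f : ℤ × ℤ → α) (w : ℤ × ℤ) : Prop := ∀ p, f (p + w) = f p

lemma IsPeriod.add {α : Type*} {f : ℤ × ℤ → α} {w w' : ℤ × ℤ} (h : IsPeriod f w)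
    (h' : IsPeriod f w') : IsPeriod f (w + w') := fun p => by
  rw [← add_assoc, h' (p + w)]; exact h p

lemma IsPeriod.neg {α : Type*} {f : ℤ × ℤ → α} {w : ℤ × ℤ} (h : IsPeriod f w) :
    IsPeriod f (-w) := fun p => by
  have e : p + -w + w = p := by abel
  have := h (p + -w)
  rw [e] at this
  exact this.symm

lemma IsPeriod.zero {α : Type*} {f : ℤ × ℤ → α} : IsPeriod f 0 := fun p => by rw [add_zero]

lemma IsPeriod.zsmul {α : Type*} {f : ℤ × ℤ → α} {w : ℤ × ℤ} (h : IsPeriod f w) (a : ℤ) :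
    IsPeriod f (a • w) := by
  induction a using Int.induction_on with
  | zero => simpa using IsPeriod.zero
  | succ n ih => rw [add_smul, one_smul]; exact ih.add h
  | pred n ih => rw [sub_smul, one_smul, sub_eq_add_neg]; exact ih.add h.neg

/-! ### torus soundness -/

lemma torB_sound {ts : List Tile} {n : ℕ} (h : torB ts n = true) : WangTilesPlane ts := by
  obtain ⟨g, hg, hok⟩ := List.any_eq_true.1 h
  set m := n + 1 with hm'
  have hm : 0 < m := Nat.succ_pos n
  have H := okTor_iff.1 hok
  have hb : ∀ x y : ℤ, g.getD (em m x * m + em m y) 0 < ts.length := fun x y =>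
    (H _ (em_lt hm x) _ (em_lt hm y)).1
  refine ⟨fun p => ⟨g.getD (em m p.1 * m + em m p.2) 0, hb p.1 p.2⟩, fun x y => ?_⟩
  constructor
  · have h2 := (H _ (em_lt hm x) _ (em_lt hm y)).2.1
    rw [get_eq_getD, get_eq_getD]
    simpa [cell, em_succ hm x] using h2
  · have h3 := (H _ (em_lt hm x) _ (em_lt hm y)).2.2
    rw [get_eq_getD, get_eq_getD]
    simpa [cell, em_succ hm y] using h3

/-! ### torus completeness -/

lemma tor_complete {ts : List Tile}
    (hper : ∃ f : ℤ × ℤ → Fin ts.length, IsPeriodicTiling ts f) :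
    ∃ n, torB ts n = true := by
  obtain ⟨f, hf, u, v, hd, hu, hv⟩ := hper
  set d : ℤ := u.1 * v.2 - u.2 * v.1 with hd'
  have h1 : IsPeriod f ((d, 0) : ℤ × ℤ) := by
    have e : ((d, 0) : ℤ × ℤ) = v.2 • u + (-u.2) • v := by
      rw [Prod.ext_iff]
      constructor <;> simp [Prod.smul_def, smul_eq_mul, hd'] <;> ring
    rw [e]; exact (IsPeriod.zsmul hu v.2).add (IsPeriod.zsmul hv (-u.2))
  have h2 : IsPeriod f ((0, d) : ℤ × ℤ) := by
    have e : ((0, d) : ℤ × ℤ) = (-v.1) • u + u.1 • v := by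
      rw [Prod.ext_iff]
      constructor <;> simp [Prod.smul_def, smul_eq_mul, hd'] <;> ring
    rw [e]; exact (IsPeriod.zsmul hu (-v.1)).add (IsPeriod.zsmul hv u.1)
  set D := d.natAbs with hD'
  have hD : 0 < D := Int.natAbs_pos.2 hd
  have hDx : IsPeriod f (((D : ℤ), 0) : ℤ × ℤ) := by
    rcases Int.natAbs_eq d with h | h
    · rw [← h]; exact h1
    · have e : (((D : ℤ), 0) : ℤ × ℤ) = -((d, 0) : ℤ × ℤ) := by
        rw [Prod.ext_iff]; constructor <;> simp <;> omega
      rw [e]; exact h1.neg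
  have hDy : IsPeriod f ((0, (D : ℤ)) : ℤ × ℤ) := by
    rcases Int.natAbs_eq d with h | h
    · rw [← h]; exact h2
    · have e : ((0, (D : ℤ)) : ℤ × ℤ) = -((0, d) : ℤ × ℤ) := by
        rw [Prod.ext_iff]; constructor <;> simp <;> omega
      rw [e]; exact h2.neg
  refine ⟨D - 1, ?_⟩
  have hDD : D - 1 + 1 = D := Nat.succ_pred_eq_of_pos hD
  rw [torB, hDD]
  apply List.any_eq_true.2
  refine ⟨gridOf (fun i j => (f ((i : ℤ), (j : ℤ))).val) D,
    gridOf_mem_cands (fun idx => (f _).isLt), okTor_iff.2 ?_⟩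
  intro i hi j hj
  have hij1 : (i + 1) % D < D := Nat.mod_lt _ hD
  have hij2 : (j + 1) % D < D := Nat.mod_lt _ hD
  rw [cell, cell, cell, gridOf_getD hi hj, gridOf_getD hij1 hj, gridOf_getD hi hij2]
  rw [← get_eq_getD, ← get_eq_getD, ← get_eq_getD]
  refine ⟨(f _).isLt, ?_, ?_⟩
  · have ht := (hf (i : ℤ) (j : ℤ)).1
    rcases Nat.lt_or_ge (i + 1) D with hlt | hge
    · rw [Nat.mod_eq_of_lt hlt]
      have e : ((i : ℤ) + 1) = ((i + 1 : ℕ) : ℤ) := by push_cast; ring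
      rw [e] at ht
      exact ht
    · have hiD : i + 1 = D := by omega
      have e : ((i : ℤ) + 1) = ((D : ℕ) : ℤ) := by rw [← hiD]; push_cast; ring
      rw [e] at ht
      have hper0 : f (((D : ℕ) : ℤ), (j : ℤ)) = f (0, (j : ℤ)) := by
        have := hDx (0, (j : ℤ))
        simpa [Prod.ext_iff] using this
      rw [hper0] at ht
      rw [hiD, Nat.mod_self]
      simpa using ht
  · have ht := (hf (i : ℤ) (j : ℤ)).2
    rcases Nat.lt_or_ge (j + 1) D with hlt | hge
    · rw [Nat.mod_eq_of_lt hlt]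
      have e : ((j : ℤ) + 1) = ((j + 1 : ℕ) : ℤ) := by push_cast; ring
      rw [e] at ht
      exact ht
    · have hjD : j + 1 = D := by omega
      have e : ((j : ℤ) + 1) = ((D : ℕ) : ℤ) := by rw [← hjD]; push_cast; ring
      rw [e] at ht
      have hper0 : f ((i : ℤ), ((D : ℕ) : ℤ)) = f ((i : ℤ), 0) := by
        have := hDy ((i : ℤ), 0)
        simpa [Prod.ext_iff] using this
      rw [hper0] at ht
      rw [hjD, Nat.mod_self]
      simpa using ht

/-! ### square restriction -/

lemma sq_complete {ts : List Tile} (hW : WangTilesPlane ts) (n : ℕ) : sqB ts n = true := by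
  obtain ⟨f, hf⟩ := hW
  set m := n + 2 with hm'
  apply List.any_eq_true.2
  refine ⟨gridOf (fun i j => (f ((i : ℤ), (j : ℤ))).val) m,
    gridOf_mem_cands (fun idx => (f _).isLt), okSq_iff.2 ?_⟩
  intro i hi j hj
  refine ⟨by rw [gridOf_getD hi hj]; exact (f _).isLt, ?_, ?_⟩
  · intro hlt
    rw [cell, cell, gridOf_getD hi hj, gridOf_getD hlt hj, ← get_eq_getD, ← get_eq_getD]
    have ht := (hf (i : ℤ) (j : ℤ)).1
    have e : ((i : ℤ) + 1) = ((i + 1 : ℕ) : ℤ) := by push_cast; ring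
    rw [e] at ht
    exact ht
  · intro hlt
    rw [cell, cell, gridOf_getD hi hj, gridOf_getD hi hlt, ← get_eq_getD, ← get_eq_getD]
    have ht := (hf (i : ℤ) (j : ℤ)).2
    have e : ((j : ℤ) + 1) = ((j + 1 : ℕ) : ℤ) := by push_cast; ring
    rw [e] at ht
    exact ht

/-! ### compactness: squares tile implies plane tiles -/

lemma sq_sound {ts : List Tile} (hsq : ∀ n, sqB ts n = true) : WangTilesPlane ts := by
  have hk : 0 < ts.length := by
    obtain ⟨g, -, hok⟩ := List.any_eq_true.1 (hsq 0)
    have := (okSq_iff.1 hok 0 (by norm_num) 0 (by norm_num)).1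
    omega
  classical
  letI : TopologicalSpace (Fin ts.length) := ⊥
  haveI : DiscreteTopology (Fin ts.length) := ⟨rfl⟩
  let Con : ℤ → ℤ → Set (ℤ × ℤ → Fin ts.length) := fun x y =>
    {F | (ts.get (F (x, y))).2.1 = (ts.get (F (x + 1, y))).2.2.2 ∧
         (ts.get (F (x, y))).1 = (ts.get (F (x, y + 1))).2.2.1}
  let C : ℕ → Set (ℤ × ℤ → Fin ts.length) := fun n =>
    ⋂ (x : ℤ) (y : ℤ) (_ : x.natAbs ≤ n ∧ y.natAbs ≤ n), Con x y
  have hCclosed : ∀ n, IsClosed (C n) := by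
    intro n
    refine isClosed_iInter fun x => isClosed_iInter fun y => isClosed_iInter fun _ => ?_
    have e : Con x y = (fun F : ℤ × ℤ → Fin ts.length => (F (x, y), F (x + 1, y), F (x, y + 1))) ⁻¹'
        {q : Fin ts.length × Fin ts.length × Fin ts.length |
          (ts.get q.1).2.1 = (ts.get q.2.1).2.2.2 ∧ (ts.get q.1).1 = (ts.get q.2.2).2.2.1} := rfl
    rw [e]
    exact (isClosed_discrete _).preimage
      ((continuous_apply _).prodMk ((continuous_apply _).prodMk (continuous_apply _)))
  have hCanti : ∀ n, C (n + 1) ⊆ C n := by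
    intro n F hF
    simp only [C, Set.mem_iInter] at hF ⊢
    intro x y hxy
    exact hF x y ⟨hxy.1.trans (Nat.le_succ n), hxy.2.trans (Nat.le_succ n)⟩
  have hCne : ∀ n, (C n).Nonempty := by
    intro n
    obtain ⟨g, -, hok⟩ := List.any_eq_true.1 (hsq (2 * n + 1))
    set m := 2 * n + 1 + 2 with hm'
    have H := okSq_iff.1 hok
    refine ⟨fun p => ⟨g.getD ((p.1 + (n + 1)).toNat * m + (p.2 + (n + 1)).toNat) 0 % ts.length,
      Nat.mod_lt _ hk⟩, ?_⟩
    simp only [C, Con, Set.mem_iInter, Set.mem_setOf_eq]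
    rintro x y ⟨hx, hy⟩
    obtain ⟨i, hi⟩ : ∃ i : ℕ, x + (n + 1) = (i : ℤ) := ⟨(x + (n + 1)).toNat, by omega⟩
    obtain ⟨j, hj⟩ : ∃ j : ℕ, y + (n + 1) = (j : ℤ) := ⟨(y + (n + 1)).toNat, by omega⟩
    have ei : (x + (n + 1)).toNat = i := by omega
    have ei1 : (x + 1 + (n + 1)).toNat = i + 1 := by omega
    have ej : (y + (n + 1)).toNat = j := by omega
    have ej1 : (y + 1 + (n + 1)).toNat = j + 1 := by omega
    have him : i < m := by omega
    have hjm : j < m := by omega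
    have him1 : i + 1 < m := by omega
    have hjm1 : j + 1 < m := by omega
    have hbij := (H i him j hjm).1
    have hbij1 := (H (i + 1) him1 j hjm).1
    have hbij2 := (H i him (j + 1) hjm1).1
    constructor
    · have ht := (H i him j hjm).2.1 him1
      rw [get_eq_getD, get_eq_getD]
      simp only [ei, ej, ei1]
      rw [Nat.mod_eq_of_lt hbij, Nat.mod_eq_of_lt hbij1]
      simpa [cell] using ht
    · have ht := (H i him j hjm).2.2 hjm1
      rw [get_eq_getD, get_eq_getD]
      simp only [ei, ej, ej1]
      rw [Nat.mod_eq_of_lt hbij, Nat.mod_eq_of_lt hbij2]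
      simpa [cell] using ht
  obtain ⟨F, hF⟩ := IsCompact.nonempty_iInter_of_sequence_nonempty_isCompact_isClosed C
    hCanti hCne ((hCclosed 0).isCompact) hCclosed
  refine ⟨F, fun x y => ?_⟩
  have hm := Set.mem_iInter.1 hF (max x.natAbs y.natAbs)
  simp only [C, Con, Set.mem_iInter, Set.mem_setOf_eq] at hm
  exact hm x y ⟨le_max_left _ _, le_max_right _ _⟩

/-! ### primitive recursiveness -/

section Primrec

open Primrec

private lemma foldl_and {α : Type*} (p : α → Bool) :
    ∀ (l : List α) (b : Bool), l.foldl (fun r x => r && p x) b = (b && l.all p)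
  | [], b => by simp
  | a :: l, b => by
    simp [foldl_and p l (b && p a), List.all_cons, Bool.and_assoc]

private lemma foldl_or {α : Type*} (p : α → Bool) :
    ∀ (l : List α) (b : Bool), l.foldl (fun r x => r || p x) b = (b || l.any p)
  | [], b => by simp
  | a :: l, b => by
    simp [foldl_or p l (b || p a), List.any_cons, Bool.or_assoc]

theorem list_all_primrec {α β : Type*} [Primcodable α] [Primcodable β]
    {f : α → List β} {p : α → β → Bool} (hf : Primrec f) (hp : Primrec₂ p) :
    Primrec fun a => (f a).all (p a) := by
  have h : Primrec fun a => (f a).foldl (fun r x => r && p a x) true :=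
    Primrec.list_foldl hf (Primrec.const true)
      (Primrec.and.comp (fst.comp snd) (hp.comp fst (snd.comp snd))).to₂
  exact h.of_eq fun a => by rw [foldl_and, Bool.true_and]

theorem list_any_primrec {α β : Type*} [Primcodable α] [Primcodable β]
    {f : α → List β} {p : α → β → Bool} (hf : Primrec f) (hp : Primrec₂ p) :
    Primrec fun a => (f a).any (p a) := by
  have h : Primrec fun a => (f a).foldl (fun r x => r || p a x) false :=
    Primrec.list_foldl hf (Primrec.const false)
      (Primrec.or.comp (fst.comp snd) (hp.comp fst (snd.comp snd))).to₂
  exact h.of_eq fun a => by rw [foldl_or, Bool.false_or]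

theorem cands_primrec : Primrec₂ cands := by
  have step : Primrec₂ fun (k : ℕ) (q : ℕ × List (List ℕ)) =>
      (List.range k).flatMap fun c => q.2.map (c :: ·) := by
    apply Primrec.list_flatMap (Primrec.list_range.comp fst)
    exact (Primrec.list_map (snd.comp (snd.comp fst))
      ((Primrec.list_cons.comp (snd.comp fst) snd).to₂)).to₂
  have h := Primrec.nat_rec (f := fun _ : ℕ => ([[]] : List (List ℕ)))
    (Primrec.const _) step
  refine h.to₂.of_eq fun k n => ?_
  induction n with
  | zero => rfl
  | succ n ih => simp [cands, ih]

section Leaf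

variable {X : Type*} [Primcodable X]
  {ts : X → List Tile} {m g i j : X → _}

private theorem cell_primrec (hts : Primrec ts) (hm : Primrec m) (hg : Primrec g)
    (hi : Primrec i) (hj : Primrec j) :
    Primrec fun x : X => cell (ts x) (m x) ((g x : List ℕ)) (i x) (j x) := by
  unfold cell
  exact (Primrec.list_getD ((0, 0, 0, 0) : Tile)).comp hts
    ((Primrec.list_getD 0).comp hg
      (Primrec.nat_add.comp (Primrec.nat_mul.comp hi hm) hj))

end Leaf

private theorem okSq_leaf :
    Primrec fun x : (((List Tile × ℕ) × List ℕ) × ℕ) × ℕ =>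
      ((decide ((x.1.1.2 : List ℕ).getD (x.1.2 * x.1.1.1.2 + x.2) 0 < x.1.1.1.1.length) &&
      (!decide (x.1.2 + 1 < x.1.1.1.2) ||
        decide ((cell x.1.1.1.1 x.1.1.1.2 x.1.1.2 x.1.2 x.2).2.1 =
          (cell x.1.1.1.1 x.1.1.1.2 x.1.1.2 (x.1.2 + 1) x.2).2.2.2))) &&
      (!decide (x.2 + 1 < x.1.1.1.2) ||
        decide ((cell x.1.1.1.1 x.1.1.1.2 x.1.1.2 x.1.2 x.2).1 =
          (cell x.1.1.1.1 x.1.1.1.2 x.1.1.2 x.1.2 (x.2 + 1)).2.2.1))) := by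
  have hts : Primrec fun x : (((List Tile × ℕ) × List ℕ) × ℕ) × ℕ => x.1.1.1.1 :=
    fst.comp (fst.comp (fst.comp fst))
  have hm : Primrec fun x : (((List Tile × ℕ) × List ℕ) × ℕ) × ℕ => x.1.1.1.2 :=
    snd.comp (fst.comp (fst.comp fst))
  have hg : Primrec fun x : (((List Tile × ℕ) × List ℕ) × ℕ) × ℕ => x.1.1.2 :=
    snd.comp (fst.comp fst)
  have hi : Primrec fun x : (((List Tile × ℕ) × List ℕ) × ℕ) × ℕ => x.1.2 := snd.comp fst
  have hj : Primrec fun x : (((List Tile × ℕ) × List ℕ) × ℕ) × ℕ => x.2 := snd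
  have hi1 := Primrec.succ.comp hi
  have hj1 := Primrec.succ.comp hj
  have hc00 := cell_primrec hts hm hg hi hj
  have hc10 := cell_primrec hts hm hg hi1 hj
  have hc01 := cell_primrec hts hm hg hi hj1
  have hentry : Primrec fun x : (((List Tile × ℕ) × List ℕ) × ℕ) × ℕ =>
      (x.1.1.2 : List ℕ).getD (x.1.2 * x.1.1.1.2 + x.2) 0 :=
    (Primrec.list_getD 0).comp hg (Primrec.nat_add.comp (Primrec.nat_mul.comp hi hm) hj)
  have hB1 := (Primrec.nat_lt.comp hentry (Primrec.list_length.comp hts)).decide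
  have hE := (Primrec.eq.comp (fst.comp (snd.comp hc00)) (snd.comp (snd.comp (snd.comp hc10)))).decide
  have hN := (Primrec.eq.comp (fst.comp hc00) (fst.comp (snd.comp (snd.comp hc01)))).decide
  have hgi := Primrec.not.comp (Primrec.nat_lt.comp hi1 hm).decide
  have hgj := Primrec.not.comp (Primrec.nat_lt.comp hj1 hm).decide
  exact Primrec.and.comp (Primrec.and.comp hB1 (Primrec.or.comp hgi hE))
    (Primrec.or.comp hgj hN)

theorem okSq_primrec :
    Primrec fun x : (List Tile × ℕ) × List ℕ => okSq x.1.1 x.1.2 x.2 := by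
  unfold okSq
  exact list_all_primrec (Primrec.list_range.comp (snd.comp fst))
    (list_all_primrec (Primrec.list_range.comp (snd.comp (fst.comp fst))) okSq_leaf)

private theorem okTor_leaf :
    Primrec fun x : (((List Tile × ℕ) × List ℕ) × ℕ) × ℕ =>
      ((decide ((x.1.1.2 : List ℕ).getD (x.1.2 * x.1.1.1.2 + x.2) 0 < x.1.1.1.1.length) &&
      decide ((cell x.1.1.1.1 x.1.1.1.2 x.1.1.2 x.1.2 x.2).2.1 =
          (cell x.1.1.1.1 x.1.1.1.2 x.1.1.2 ((x.1.2 + 1) % x.1.1.1.2) x.2).2.2.2)) &&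
      decide ((cell x.1.1.1.1 x.1.1.1.2 x.1.1.2 x.1.2 x.2).1 =
          (cell x.1.1.1.1 x.1.1.1.2 x.1.1.2 x.1.2 ((x.2 + 1) % x.1.1.1.2)).2.2.1)) := by
  have hts : Primrec fun x : (((List Tile × ℕ) × List ℕ) × ℕ) × ℕ => x.1.1.1.1 :=
    fst.comp (fst.comp (fst.comp fst))
  have hm : Primrec fun x : (((List Tile × ℕ) × List ℕ) × ℕ) × ℕ => x.1.1.1.2 :=
    snd.comp (fst.comp (fst.comp fst))
  have hg : Primrec fun x : (((List Tile × ℕ) × List ℕ) × ℕ) × ℕ => x.1.1.2 :=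
    snd.comp (fst.comp fst)
  have hi : Primrec fun x : (((List Tile × ℕ) × List ℕ) × ℕ) × ℕ => x.1.2 := snd.comp fst
  have hj : Primrec fun x : (((List Tile × ℕ) × List ℕ) × ℕ) × ℕ => x.2 := snd
  have hi1 := Primrec.nat_mod.comp (Primrec.succ.comp hi) hm
  have hj1 := Primrec.nat_mod.comp (Primrec.succ.comp hj) hm
  have hc00 := cell_primrec hts hm hg hi hj
  have hc10 := cell_primrec hts hm hg hi1 hj
  have hc01 := cell_primrec hts hm hg hi hj1
  have hentry : Primrec fun x : (((List Tile × ℕ) × List ℕ) × ℕ) × ℕ =>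
      (x.1.1.2 : List ℕ).getD (x.1.2 * x.1.1.1.2 + x.2) 0 :=
    (Primrec.list_getD 0).comp hg (Primrec.nat_add.comp (Primrec.nat_mul.comp hi hm) hj)
  have hB1 := (Primrec.nat_lt.comp hentry (Primrec.list_length.comp hts)).decide
  have hE := (Primrec.eq.comp (fst.comp (snd.comp hc00)) (snd.comp (snd.comp (snd.comp hc10)))).decide
  have hN := (Primrec.eq.comp (fst.comp hc00) (fst.comp (snd.comp (snd.comp hc01)))).decide
  exact Primrec.and.comp (Primrec.and.comp hB1 hE) hN

theorem okTor_primrec :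
    Primrec fun x : (List Tile × ℕ) × List ℕ => okTor x.1.1 x.1.2 x.2 := by
  unfold okTor
  exact list_all_primrec (Primrec.list_range.comp (snd.comp fst))
    (list_all_primrec (Primrec.list_range.comp (snd.comp (fst.comp fst))) okTor_leaf)

theorem sqB_primrec : Primrec₂ sqB := by
  unfold sqB
  exact list_any_primrec
    (cands_primrec.comp (Primrec.list_length.comp fst)
      (Primrec.nat_mul.comp (Primrec.succ.comp (Primrec.succ.comp snd))
        (Primrec.succ.comp (Primrec.succ.comp snd))))
    (okSq_primrec.comp
      (Primrec.pair (Primrec.pair (fst.comp fst)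
        (Primrec.succ.comp (Primrec.succ.comp (snd.comp fst)))) snd))

theorem torB_primrec : Primrec₂ torB := by
  unfold torB
  exact list_any_primrec
    (cands_primrec.comp (Primrec.list_length.comp fst)
      (Primrec.nat_mul.comp (Primrec.succ.comp snd) (Primrec.succ.comp snd)))
    (okTor_primrec.comp
      (Primrec.pair (Primrec.pair (fst.comp fst)
        (Primrec.succ.comp (snd.comp fst))) snd))

end Primrec

end DominoAux

/-- if every Wang tile set that tiles the plane also admits a periodic
tiling, then the Domino problem is decidable. -/
theorem domino_decidable_of_periodicity
    (h : ∀ ts : List (ℕ × ℕ × ℕ × ℕ), WangTilesPlane ts →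
      ∃ f : ℤ × ℤ → Fin ts.length, IsPeriodicTiling ts f) :
    ComputablePred (fun ts : List (ℕ × ℕ × ℕ × ℕ) => WangTilesPlane ts) := by
  classical
  open DominoAux in
  have hq : Computable₂ fun (ts : List Tile) (n : ℕ) => torB ts n || !sqB ts n :=
    Primrec₂.to_comp (Primrec.or.comp torB_primrec (Primrec.not.comp sqB_primrec))
  have htor : Computable₂ torB := torB_primrec.to_comp
  have hpart : Partrec fun ts : List Tile =>
      (Nat.rfind ((fun n => torB ts n || !sqB ts n) : ℕ →. Bool)).map (torB ts) :=
    (Partrec.rfind hq.partrec₂).map htor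
  refine ⟨Classical.decPred _, Partrec.of_eq_tot hpart ?_⟩
  intro ts
  have hex : ∃ n, (torB ts n || !sqB ts n) = true := by
    by_cases hW : WangTilesPlane ts
    · obtain ⟨n, hn⟩ := tor_complete (h ts hW)
      exact ⟨n, by simp [hn]⟩
    · have hna : ¬ ∀ n, sqB ts n = true := fun hall => hW (sq_sound hall)
      push_neg at hna
      obtain ⟨n, hn⟩ := hna
      refine ⟨n, ?_⟩
      have : sqB ts n = false := by revert hn; cases sqB ts n <;> simp
      simp [this]
  obtain ⟨m, hm⟩ := hex
  obtain ⟨n₀, hn₀, -⟩ := Nat.rfind_min' (p := fun n => torB ts n || !sqB ts n) hm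
  have hspec : (torB ts n₀ || !sqB ts n₀) = true := by
    simpa using Nat.rfind_spec hn₀
  have key : decide (WangTilesPlane ts) = torB ts n₀ := by
    by_cases htor0 : torB ts n₀ = true
    · rw [htor0, decide_eq_true_eq]
      exact torB_sound htor0
    · have h4 : torB ts n₀ = false := by revert htor0; cases torB ts n₀ <;> simp
      have hsq0 : sqB ts n₀ = false := by
        rw [h4] at hspec
        simpa using hspec
      have hnW : ¬ WangTilesPlane ts := fun hW => by
        simp [sq_complete hW n₀] at hsq0
      rw [h4, decide_eq_false_iff_not]
      exact hnW
  rw [key]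
  exact Part.mem_map _ hn₀
end
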